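/- arXiv:math/0312169 — 4 statements merged into one kernel-verified Lean document; each statement's English description precedes it below -/
import Mathlib

section
/- For each pair of rows (2i−1, 2i) of a μ-UASM, at most one of the two rows can consist entirely of zeros, and if one row of the pair is entirely zero then the other row has all nonzero entries alternating starting and ending with 1. -/
open scoped Classical

/-- A `μ`-alternating sign matrix with U-turn boundary (μ-UASM):
a `2n × m` matrix over `ℤ` satisfying (UA1)–(UA5). -/
def IsUASM (n m : ℕ) (μ : Fin n → ℕ) (A : Fin (2*n) → Fin m → ℤ) : Prop :=
  (∀ i q, A i q = -1 ∨ A i q = 0 ∨ A i q = 1) ∧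
  (∀ (i : Fin (2*n)) (p : Fin m),
      (∑ q ∈ Finset.univ.filter (fun q => p ≤ q), A i q) = 0 ∨
      (∑ q ∈ Finset.univ.filter (fun q => p ≤ q), A i q) = 1) ∧
  (∀ (j : Fin (2*n)) (q : Fin m),
      (∑ i ∈ Finset.univ.filter (fun i => j ≤ i), A i q) = 0 ∨
      (∑ i ∈ Finset.univ.filter (fun i => j ≤ i), A i q) = 1) ∧
  (∀ k : Fin n,
      (∑ q : Fin m, (A ⟨2*k.val, by have := k.isLt; omega⟩ q
           + A ⟨2*k.val+1, by have := k.isLt; omega⟩ q)) = 1) ∧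
  (∀ q : Fin m, (∑ i, A i q) = if ∃ k, μ k = q.val+1 then 1 else 0)

/-- Row `r` of `A` has its nonzero entries alternating in sign,
starting and ending with `1`. -/
def AltRowOne (n m : ℕ) (A : Fin (2*n) → Fin m → ℤ) (r : Fin (2*n)) : Prop :=
  (∀ q, A r q ≠ 0 → (∀ p, p < q → A r p = 0) → A r q = 1) ∧
  (∀ q, A r q ≠ 0 → (∀ p, q < p → A r p = 0) → A r q = 1) ∧
  (∀ q p, q < p → A r q ≠ 0 → A r p ≠ 0 →
      (∀ l, q < l → l < p → A r l = 0) → A r p = - A r q)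

/-!
Every entry of a row is a difference of consecutive suffix sums, `f q = S q - T q` with
`S q = ∑_{l ≥ q} f l` and `T q = ∑_{l > q} f l`, and all of these lie in `{0, 1}`. So a nonzero
entry is `1` exactly when `T q = 0`, and between two consecutive nonzero entries `q < p` one has
`T q = S p`, which forces `f p = -f q`. A row with total sum `1` starts with `1`; since the two
rows of a U-turn pair sum to `1`, the other row of a zero row has total sum `1`.
-/

open Finset

section SuffixSums

variable {ι : Type*} [LinearOrder ι] [LocallyFiniteOrderTop ι] {f : ι → ℤ}

lemma sum_Ioi_eq_zero_or_eq_one (hS : ∀ p, ∑ l ∈ Ici p, f l = 0 ∨ ∑ l ∈ Ici p, f l = 1)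
    (q : ι) : ∑ l ∈ Ioi q, f l = 0 ∨ ∑ l ∈ Ioi q, f l = 1 := by
  rcases (Ioi q).eq_empty_or_nonempty with hempty | hne
  · simp [hempty]
  · have hIoi : Ioi q = Ici ((Ioi q).min' hne) := by
      ext l
      rw [mem_Ici]
      exact ⟨min'_le _ _, fun hl ↦ mem_Ioi.2 ((mem_Ioi.1 (min'_mem _ hne)).trans_le hl)⟩
    rw [hIoi]
    exact hS _

lemma sum_Ioi_eq_sum_Ici_of_eq_zero_on_Ioo {q p : ι} (hqp : q < p)
    (hzero : ∀ l, q < l → l < p → f l = 0) : ∑ l ∈ Ioi q, f l = ∑ l ∈ Ici p, f l := by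
  refine (sum_subset (fun l hl ↦ mem_Ioi.2 (hqp.trans_le (mem_Ici.1 hl))) ?_).symm
  intro l hl hnl
  exact hzero l (mem_Ioi.1 hl) (not_le.1 (mt mem_Ici.2 hnl))

variable (hS : ∀ p, ∑ l ∈ Ici p, f l = 0 ∨ ∑ l ∈ Ici p, f l = 1)
include hS

lemma eq_one_of_first_ne_zero [Fintype ι] (htot : ∑ l, f l = 1) {q : ι} (hq : f q ≠ 0)
    (hzero : ∀ p, p < q → f p = 0) : f q = 1 := by
  have hSq : ∑ l ∈ Ici q, f l = 1 := by
    rw [← htot]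
    exact sum_subset (subset_univ _) fun l _ hl ↦ hzero l (not_le.1 (mt mem_Ici.2 hl))
  have hsplit := add_sum_Ioi_eq_sum_Ici (f := f) q
  rcases sum_Ioi_eq_zero_or_eq_one hS q with hT | hT <;> omega

lemma eq_one_of_last_ne_zero {q : ι} (hq : f q ≠ 0) (hzero : ∀ p, q < p → f p = 0) :
    f q = 1 := by
  have hT : ∑ l ∈ Ioi q, f l = 0 := sum_eq_zero fun l hl ↦ hzero l (mem_Ioi.1 hl)
  have hsplit := add_sum_Ioi_eq_sum_Ici (f := f) q
  rcases hS q with hSq | hSq <;> omega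

lemma eq_neg_of_consecutive_ne_zero {q p : ι} (hqp : q < p) (hq : f q ≠ 0) (hp : f p ≠ 0)
    (hzero : ∀ l, q < l → l < p → f l = 0) : f p = -f q := by
  have hTq := sum_Ioi_eq_sum_Ici_of_eq_zero_on_Ioo hqp hzero
  have hsplit_q := add_sum_Ioi_eq_sum_Ici (f := f) q
  have hsplit_p := add_sum_Ioi_eq_sum_Ici (f := f) p
  rcases hS q with h1 | h1 <;> rcases hS p with h2 | h2 <;>
    rcases sum_Ioi_eq_zero_or_eq_one hS p with h3 | h3 <;> omega

end SuffixSums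

lemma altRowOne_of_suffix_sums {n m : ℕ} (A : Fin (2*n) → Fin m → ℤ) (r : Fin (2*n))
    (hS : ∀ p : Fin m, (∑ q ∈ univ.filter (fun q => p ≤ q), A r q) = 0 ∨
      (∑ q ∈ univ.filter (fun q => p ≤ q), A r q) = 1)
    (htot : ∑ q, A r q = 1) : AltRowOne n m A r := by
  simp only [filter_le_eq_Ici] at hS
  exact ⟨fun _ ↦ eq_one_of_first_ne_zero hS htot, fun _ ↦ eq_one_of_last_ne_zero hS,
    fun _ _ ↦ eq_neg_of_consecutive_ne_zero hS⟩

/-- In each U-turn pair of rows of a `μ`-UASM at most one row is entirely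
zero, and if one row of the pair is zero then the other has all of its nonzero
entries alternating, starting and ending with `1`. -/
theorem uasm_uturn_pair (n m : ℕ) (μ : Fin n → ℕ)
    (A : Fin (2*n) → Fin m → ℤ) (hA : IsUASM n m μ A) (k : Fin n) :
    (¬ ((∀ q, A ⟨2*k.val, by have := k.isLt; omega⟩ q = 0) ∧
        (∀ q, A ⟨2*k.val+1, by have := k.isLt; omega⟩ q = 0))) ∧
    ((∀ q, A ⟨2*k.val, by have := k.isLt; omega⟩ q = 0) →
        AltRowOne n m A ⟨2*k.val+1, by have := k.isLt; omega⟩) ∧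
    ((∀ q, A ⟨2*k.val+1, by have := k.isLt; omega⟩ q = 0) →
        AltRowOne n m A ⟨2*k.val, by have := k.isLt; omega⟩) := by
  obtain ⟨-, hS, -, hpair, -⟩ := hA
  set r0 : Fin (2*n) := ⟨2*k.val, by have := k.isLt; omega⟩
  set r1 : Fin (2*n) := ⟨2*k.val+1, by have := k.isLt; omega⟩
  have hsum : ∑ q, A r0 q + ∑ q, A r1 q = 1 := by
    rw [← sum_add_distrib]
    exact hpair k
  have sum_eq_zero_of_row_zero (r : Fin (2*n)) (h : ∀ q, A r q = 0) : ∑ q, A r q = 0 :=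
    sum_eq_zero fun q _ ↦ h q
  refine ⟨?_, fun h0 ↦ ?_, fun h1 ↦ ?_⟩
  · rintro ⟨h0, h1⟩
    have := sum_eq_zero_of_row_zero r0 h0
    have := sum_eq_zero_of_row_zero r1 h1
    omega
  · have := sum_eq_zero_of_row_zero r0 h0
    exact altRowOne_of_suffix_sums A r1 (hS r1) (by omega)
  · have := sum_eq_zero_of_row_zero r1 h1
    exact altRowOne_of_suffix_sums A r0 (hS r0) (by omega)
end

section
/- There is a bijection between the set of sp(2n)-standard shifted tableaux of shape μ and the set of 2n×m μ-alternating sign matrices with U-turn boundary, where m = μ_1. -/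
open scoped Classical

/-- Box `(i,j)` belongs to the shifted Young diagram of `μ` (0-indexed):
row `i` occupies columns `i, i+1, …, i+μ_i−1`. -/
def Cell (n m : ℕ) (μ : Fin n → ℕ) (i : Fin n) (j : Fin m) : Prop :=
  i.val ≤ j.val ∧ j.val < μ i + i.val

/-- An `sp(2n)`-standard shifted tableau of shape `μ`.  Entries are encoded in
`Fin (2n)` with the barred letter `k̄` as `2(k−1)` and the unbarred letter `k`
as `2(k−1)+1`, so the order `1̄ < 1 < 2̄ < 2 < ⋯ < n̄ < n` is the natural one.
Boxes outside the shape are normalised to `0`. -/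
def IsSST (n m : ℕ) (μ : Fin n → ℕ) (T : Fin n → Fin m → Fin (2*n)) : Prop :=
  (∀ i j, ¬ Cell n m μ i j → (T i j).val = 0) ∧
  (∀ (i : Fin n) (j : Fin m), i.val = j.val → Cell n m μ i j →
      ((T i j).val = 2*i.val ∨ (T i j).val = 2*i.val+1)) ∧
  (∀ i j j', Cell n m μ i j → Cell n m μ i j' → j ≤ j' → T i j ≤ T i j') ∧
  (∀ i i' j, Cell n m μ i j → Cell n m μ i' j → i ≤ i' → T i j ≤ T i' j) ∧
  (∀ i i' j j', Cell n m μ i j → Cell n m μ i' j' →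
      i'.val = i.val+1 → j'.val = j.val+1 → T i j < T i' j')

namespace SUaux

/-- A down-closed finset of naturals is an initial segment. -/
lemma downclosed_nat (s : Finset ℕ) (h : ∀ x ∈ s, ∀ y ≤ x, y ∈ s) :
    s = Finset.range s.card := by
  have hsub : s ⊆ Finset.range s.card := by
    intro x hx
    simp only [Finset.mem_range]
    by_contra hc
    push_neg at hc
    have hr : Finset.range (x+1) ⊆ s := by
      intro y hy
      exact h x hx y (by simpa [Nat.lt_succ_iff] using hy)
    have := Finset.card_le_card hr
    simp only [Finset.card_range] at this
    omega
  exact Finset.eq_of_subset_of_card_le hsub (by simp)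

/-- Membership criterion for down-closed finsets of `Fin N`. -/
lemma downclosed_fin {N : ℕ} (s : Finset (Fin N))
    (h : ∀ x ∈ s, ∀ y : Fin N, y.val ≤ x.val → y ∈ s) (x : Fin N) :
    x ∈ s ↔ x.val < s.card := by
  have himg : s.image Fin.val = Finset.range s.card := by
    have hcard : (s.image Fin.val).card = s.card :=
      Finset.card_image_of_injective _ Fin.val_injective
    rw [← hcard]
    apply downclosed_nat
    intro a ha y hy
    simp only [Finset.mem_image] at ha ⊢
    obtain ⟨j, hj, rfl⟩ := ha
    exact ⟨⟨y, lt_of_le_of_lt hy j.isLt⟩, h j hj _ hy, rfl⟩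
  constructor
  · intro hx
    have : x.val ∈ s.image Fin.val := Finset.mem_image_of_mem _ hx
    rw [himg] at this; simpa using this
  · intro hx
    have : x.val ∈ Finset.range s.card := by simpa using hx
    rw [← himg] at this
    simp only [Finset.mem_image] at this
    obtain ⟨j, hj, hjv⟩ := this
    rwa [show x = j from (Fin.val_injective hjv).symm]

lemma card_filter_fin_lt {N v : ℕ} (hv : v ≤ N) :
    (Finset.univ.filter (fun i : Fin N => i.val < v)).card = v := by
  rw [show v = (Finset.range v).card by simp]
  apply Finset.card_nbij (fun i => i.val)
  · intro a ha; simp only [Finset.mem_coe, Finset.mem_filter] at ha; simpa using ha.2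
  · intro a _ b _ hab; exact Fin.val_injective hab
  · intro x hx
    simp only [Finset.coe_range, Set.mem_Iio] at hx
    exact ⟨⟨x, lt_of_lt_of_le hx hv⟩, by simp [hx], rfl⟩

lemma card_filter_fin_Ico {N a b : ℕ} (hb : b ≤ N) :
    (Finset.univ.filter (fun j : Fin N => a ≤ j.val ∧ j.val < b)).card = b - a := by
  rw [show b - a = (Finset.Ico a b).card by simp]
  apply Finset.card_nbij (fun i => i.val)
  · intro x hx; simp only [Finset.mem_coe, Finset.mem_filter] at hx; simp [Finset.mem_Ico, hx.2.1, hx.2.2]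
  · intro x _ y _ hxy; exact Fin.val_injective hxy
  · intro x hx
    simp only [Finset.coe_Ico, Set.mem_Ico] at hx
    exact ⟨⟨x, lt_of_lt_of_le hx.2 hb⟩, by simp [hx.1, hx.2], rfl⟩

/-- Telescoping sum over the bottom rows. -/
lemma sum_filter_telescope {N : ℕ} (W : ℕ → ℤ) (j : Fin N) :
    ∑ r ∈ Finset.univ.filter (fun r : Fin N => j ≤ r),
      (W (N - r.val) - W (N - 1 - r.val)) = W (N - j.val) - W 0 := by
  have h1 : ∑ r ∈ Finset.univ.filter (fun r : Fin N => j ≤ r),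
      (W (N - r.val) - W (N - 1 - r.val))
      = ∑ x ∈ Finset.Ico j.val N, (W (N - x) - W (N - 1 - x)) := by
    apply Finset.sum_nbij (fun r => r.val)
    · intro x hx; simp only [Finset.mem_filter, Fin.le_def] at hx
      simp [Finset.mem_Ico, hx.2, x.isLt]
    · intro x _ y _ hxy; exact Fin.val_injective hxy
    · intro x hx
      simp only [Finset.coe_Ico, Set.mem_Ico] at hx
      exact ⟨⟨x, hx.2⟩, Finset.mem_filter.2 ⟨Finset.mem_univ _, by simpa [Fin.le_def] using hx.1⟩, rfl⟩
    · intro x _; rfl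
  rw [h1, Finset.sum_Ico_eq_sum_range]
  have h2 : ∀ k ∈ Finset.range (N - j.val),
      (W (N - (j.val + k)) - W (N - 1 - (j.val + k)))
      = ((fun t => W (N - j.val - t)) k - (fun t => W (N - j.val - t)) (k+1)) := by
    intro k hk
    simp only [Finset.mem_range] at hk
    have e1 : N - (j.val + k) = N - j.val - k := by omega
    have e2 : N - 1 - (j.val + k) = N - j.val - (k+1) := by omega
    rw [e1, e2]
  rw [Finset.sum_congr rfl h2, Finset.sum_range_sub' (fun t => W (N - j.val - t))]
  have : N - j.val - (N - j.val) = 0 := by omega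
  simp [this]

end SUaux

namespace SU
open SUaux

variable {n m : ℕ} {μ : Fin n → ℕ}

/-- bundled shape hypotheses -/
def Shp (n m : ℕ) (μ : Fin n → ℕ) : Prop :=
  0 < n ∧ StrictAnti μ ∧ (∀ i, 0 < μ i) ∧ ∀ (h0 : 0 < n), m = μ ⟨0, h0⟩

lemma mu_le (hs : Shp n m μ) (i : Fin n) : μ i + i.val ≤ m := by
  obtain ⟨hn, hμ, hpos, hm⟩ := hs
  suffices h : ∀ v (hv : v < n), μ ⟨v, hv⟩ + v ≤ μ ⟨0, hn⟩ by
    have := h i.val i.isLt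
    simp only [Fin.eta] at this
    have := hm hn
    omega
  intro v
  induction v with
  | zero => intro hv; simp
  | succ w ih =>
    intro hv
    have hw : w < n := by omega
    have := hμ (show (⟨w, hw⟩ : Fin n) < ⟨w+1, hv⟩ by simp [Fin.lt_def])
    have := ih hw
    have := hm hn
    omega

lemma mu_le_m (hs : Shp n m μ) (i : Fin n) : μ i ≤ m := by
  have := mu_le hs i; omega

lemma cell_card (hs : Shp n m μ) (i : Fin n) :
    (Finset.univ.filter (fun j : Fin m => Cell n m μ i j)).card = μ i := by
  have h : (Finset.univ.filter (fun j : Fin m => Cell n m μ i j))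
      = Finset.univ.filter (fun j : Fin m => i.val ≤ j.val ∧ j.val < μ i + i.val) := by
    apply Finset.filter_congr; intro j _; rfl
  rw [h, card_filter_fin_Ico (mu_le hs i)]
  omega

/-! ### Matrix side -/

/-- Corner sums: sum of the bottom `t` rows, columns `≥ p`. -/
noncomputable def gmat (A : Fin (2*n) → Fin m → ℤ) (t p : ℕ) : ℤ :=
  ∑ r ∈ Finset.univ.filter (fun r : Fin (2*n) => 2*n - t ≤ r.val),
    ∑ q ∈ Finset.univ.filter (fun q : Fin m => p ≤ q.val), A r q

lemma g_zero (A : Fin (2*n) → Fin m → ℤ) (p : ℕ) : gmat A 0 p = 0 := by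
  unfold gmat
  rw [Finset.filter_false_of_mem, Finset.sum_empty]
  intro r _
  have := r.isLt
  omega

lemma g_zero_p (A : Fin (2*n) → Fin m → ℤ) (t p : ℕ) (hp : m ≤ p) : gmat A t p = 0 := by
  unfold gmat
  apply Finset.sum_eq_zero
  intro r _
  rw [Finset.filter_false_of_mem, Finset.sum_empty]
  intro q _
  have := q.isLt
  omega

lemma g_succ_t (A : Fin (2*n) → Fin m → ℤ) (t p : ℕ) (ht : t < 2*n) :
    gmat A (t+1) p - gmat A t p
      = ∑ q ∈ Finset.univ.filter (fun q : Fin m => p ≤ q.val), A ⟨2*n-1-t, by omega⟩ q := by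
  unfold gmat
  have h : Finset.univ.filter (fun r : Fin (2*n) => 2*n - (t+1) ≤ r.val)
      = insert ⟨2*n-1-t, by omega⟩
          (Finset.univ.filter (fun r : Fin (2*n) => 2*n - t ≤ r.val)) := by
    ext r
    simp only [Finset.mem_filter, Finset.mem_univ, true_and, Finset.mem_insert, Fin.ext_iff]
    omega
  rw [h, Finset.sum_insert (by simp; omega)]
  ring

lemma g_step_t {A : Fin (2*n) → Fin m → ℤ} (hA : IsUASM n m μ A) (t p : ℕ) (ht : t < 2*n) :
    gmat A t p ≤ gmat A (t+1) p ∧ gmat A (t+1) p ≤ gmat A t p + 1 := by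
  have h := g_succ_t A t p ht
  by_cases hp : p < m
  · have h2 := hA.2.1 ⟨2*n-1-t, by omega⟩ ⟨p, hp⟩
    have heq : (Finset.univ.filter (fun q : Fin m => (⟨p, hp⟩ : Fin m) ≤ q))
        = Finset.univ.filter (fun q : Fin m => p ≤ q.val) := by
      apply Finset.filter_congr; intro q _; simp [Fin.le_def]
    rw [heq] at h2
    rcases h2 with h2 | h2 <;> constructor <;> omega
  · have h0 : (∑ q ∈ Finset.univ.filter (fun q : Fin m => p ≤ q.val),
        A ⟨2*n-1-t, by omega⟩ q) = 0 := by
      rw [Finset.filter_false_of_mem, Finset.sum_empty]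
      intro q _; have := q.isLt; omega
    rw [h0] at h
    constructor <;> omega

lemma g_mono_t {A : Fin (2*n) → Fin m → ℤ} (hA : IsUASM n m μ A) {t t' : ℕ} (p : ℕ)
    (h : t ≤ t') (h2 : t' ≤ 2*n) : gmat A t p ≤ gmat A t' p := by
  induction t' with
  | zero => simp_all
  | succ s ih =>
    rcases Nat.lt_or_ge t (s+1) with hlt | hge
    · have hs : s < 2*n := by omega
      have := (g_step_t hA s p hs).1
      have := ih (by omega) (by omega)
      omega
    · have : t = s+1 := by omega
      simp [this]

lemma g_succ_p (A : Fin (2*n) → Fin m → ℤ) (t p : ℕ) (hp : p < m) :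
    gmat A t p - gmat A t (p+1)
      = ∑ r ∈ Finset.univ.filter (fun r : Fin (2*n) => 2*n - t ≤ r.val), A r ⟨p, hp⟩ := by
  unfold gmat
  rw [← Finset.sum_sub_distrib]
  apply Finset.sum_congr rfl
  intro r _
  have h : Finset.univ.filter (fun q : Fin m => p ≤ q.val)
      = insert ⟨p, hp⟩ (Finset.univ.filter (fun q : Fin m => p+1 ≤ q.val)) := by
    ext q
    simp only [Finset.mem_filter, Finset.mem_univ, true_and, Finset.mem_insert, Fin.ext_iff]
    omega
  rw [h, Finset.sum_insert (by simp)]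
  ring

lemma g_step_p {A : Fin (2*n) → Fin m → ℤ} (hA : IsUASM n m μ A) (t p : ℕ) (ht : t ≤ 2*n) :
    gmat A t (p+1) ≤ gmat A t p ∧ gmat A t p ≤ gmat A t (p+1) + 1 := by
  by_cases hp : p < m
  · have h := g_succ_p A t p hp
    rcases Nat.eq_zero_or_pos t with rfl | htpos
    · rw [g_zero, g_zero]; omega
    · have h2 := hA.2.2.1 ⟨2*n - t, by omega⟩ ⟨p, hp⟩
      have heq : (Finset.univ.filter (fun r : Fin (2*n) => (⟨2*n-t, by omega⟩ : Fin (2*n)) ≤ r))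
          = Finset.univ.filter (fun r : Fin (2*n) => 2*n - t ≤ r.val) := by
        apply Finset.filter_congr; intro r _; simp [Fin.le_def]
      rw [heq] at h2
      rcases h2 with h2 | h2 <;> constructor <;> omega
  · rw [g_zero_p A t (p+1) (by omega), g_zero_p A t p (by omega)]
    omega

lemma g_anti_p {A : Fin (2*n) → Fin m → ℤ} (hA : IsUASM n m μ A) (t : ℕ) {p p' : ℕ}
    (h : p ≤ p') (ht : t ≤ 2*n) : gmat A t p' ≤ gmat A t p := by
  induction p' with
  | zero => simp_all
  | succ s ih =>
    rcases Nat.lt_or_ge p (s+1) with hlt | hge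
    · have := (g_step_p hA t s ht).1
      have := ih (by omega)
      omega
    · have : p = s+1 := by omega
      simp [this]

lemma g_anti_step {A : Fin (2*n) → Fin m → ℤ} (hA : IsUASM n m μ A) (t p : ℕ) (d : ℕ)
    (ht : t ≤ 2*n) : gmat A t p - d ≤ gmat A t (p + d) := by
  induction d with
  | zero => simp
  | succ s ih =>
    have := (g_step_p hA t (p+s) ht).2
    have : gmat A t (p+s) ≤ gmat A t (p+s+1) + 1 := this
    push_cast
    push_cast at ih
    have he : p + (s+1) = p + s + 1 := by omega
    rw [he]
    omega

lemma g_nonneg {A : Fin (2*n) → Fin m → ℤ} (hA : IsUASM n m μ A) (t p : ℕ) (ht : t ≤ 2*n) :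
    0 ≤ gmat A t p := by
  rcases Nat.lt_or_ge p m with hp | hp
  · have := g_anti_p hA t (show p ≤ m from by omega) ht
    rw [g_zero_p A t m (le_refl m)] at this
    exact this
  · rw [g_zero_p A t p hp]

lemma g_even {A : Fin (2*n) → Fin m → ℤ} (hA : IsUASM n m μ A) (k : ℕ) (hk : k ≤ n) :
    gmat A (2*k) 0 = k := by
  induction k with
  | zero => simpa using g_zero A 0
  | succ s ih =>
    have hs : s < n := by omega
    have h1 := g_succ_t A (2*s) 0 (by omega)
    have h2 := g_succ_t A (2*s+1) 0 (by omega)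
    have huniv : (Finset.univ.filter (fun q : Fin m => 0 ≤ q.val)) = Finset.univ := by
      apply Finset.filter_true_of_mem; intro q _; omega
    rw [huniv] at h1 h2
    have h4 := hA.2.2.2.1 ⟨n - 1 - s, by omega⟩
    rw [Finset.sum_add_distrib] at h4
    have e1 : (∑ q : Fin m, A ⟨2*n-1-(2*s+1), by omega⟩ q)
        = ∑ q : Fin m, A ⟨2 * ((⟨n-1-s, by omega⟩ : Fin n) : ℕ), by have := (⟨n-1-s, by omega⟩ : Fin n).isLt; omega⟩ q := by
      apply Finset.sum_congr rfl; intro q _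
      exact congrFun (congrArg A (Fin.ext (by simp; omega))) q
    have e2 : (∑ q : Fin m, A ⟨2*n-1-2*s, by omega⟩ q)
        = ∑ q : Fin m, A ⟨2 * ((⟨n-1-s, by omega⟩ : Fin n) : ℕ) + 1, by have := (⟨n-1-s, by omega⟩ : Fin n).isLt; omega⟩ q := by
      apply Finset.sum_congr rfl; intro q _
      exact congrFun (congrArg A (Fin.ext (by simp; omega))) q
    have ihv := ih (by omega)
    have e3 : 2 * (s+1) = 2*s+1+1 := by omega
    rw [e3]
    push_cast
    omega

lemma g_full {A : Fin (2*n) → Fin m → ℤ} (hA : IsUASM n m μ A) (hs : Shp n m μ) (p : ℕ) :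
    gmat A (2*n) p = ((Finset.univ.filter (fun k : Fin n => p < μ k)).card : ℤ) := by
  unfold gmat
  have huniv : (Finset.univ.filter (fun r : Fin (2*n) => 2*n - 2*n ≤ r.val)) = Finset.univ := by
    apply Finset.filter_true_of_mem; intro r _; omega
  rw [huniv, Finset.sum_comm]
  have h : ∀ q ∈ Finset.univ.filter (fun q : Fin m => p ≤ q.val),
      (∑ r : Fin (2*n), A r q) = if ∃ k, μ k = q.val + 1 then 1 else 0 := by
    intro q _; exact hA.2.2.2.2 q
  rw [Finset.sum_congr rfl h, Finset.sum_boole, Finset.filter_filter]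
  congr 1
  symm
  apply Finset.card_nbij (fun k : Fin n => ⟨μ k - 1, by
      have h1 := hs.2.2.1 k
      have h2 := mu_le_m hs k
      omega⟩ : Fin n → Fin m)
  · intro k hk
    simp only [Finset.mem_coe, Finset.mem_filter, Finset.mem_univ, true_and] at hk ⊢
    have h1 := hs.2.2.1 k
    exact ⟨by omega, ⟨k, by omega⟩⟩
  · intro k _ k' _ hkk
    simp only [Fin.mk.injEq] at hkk
    have h1 := hs.2.2.1 k
    have h2 := hs.2.2.1 k'
    apply hs.2.1.injective
    omega
  · intro q hq
    simp only [Finset.coe_filter, Set.mem_setOf_eq, Finset.mem_univ, true_and] at hq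
    obtain ⟨hpq, k, hk⟩ := hq
    refine ⟨k, ?_, ?_⟩
    · simp only [Finset.coe_filter, Set.mem_setOf_eq, Finset.mem_univ, true_and]
      omega
    · exact Fin.ext (by simp; omega)

lemma g_full_iff {A : Fin (2*n) → Fin m → ℤ} (hA : IsUASM n m μ A) (hs : Shp n m μ)
    (p : ℕ) (i : Fin n) : ((i : ℤ) + 1 ≤ gmat A (2*n) p ↔ p < μ i) := by
  rw [g_full hA hs p]
  constructor
  · intro h
    by_contra hc
    push_neg at hc
    have hsub : (Finset.univ.filter (fun k : Fin n => p < μ k))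
        ⊆ Finset.univ.filter (fun k : Fin n => k.val < i.val) := by
      intro k hk
      simp only [Finset.mem_filter, Finset.mem_univ, true_and] at hk ⊢
      by_contra hik
      push_neg at hik
      have : μ k ≤ μ i := hs.2.1.antitone (Fin.le_def.mpr (by omega))
      omega
    have := Finset.card_le_card hsub
    rw [card_filter_fin_lt (by omega : i.val ≤ n)] at this
    omega
  · intro h
    have hsub : Finset.univ.filter (fun k : Fin n => k.val < i.val + 1)
        ⊆ Finset.univ.filter (fun k : Fin n => p < μ k) := by
      intro k hk
      simp only [Finset.mem_filter, Finset.mem_univ, true_and] at hk ⊢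
      have : μ i ≤ μ k := hs.2.1.antitone (Fin.le_def.mpr (by omega))
      omega
    have := Finset.card_le_card hsub
    rw [card_filter_fin_lt (by omega : i.val + 1 ≤ n)] at this
    omega

lemma g_le_n {A : Fin (2*n) → Fin m → ℤ} (hA : IsUASM n m μ A) (t p : ℕ) (ht : t ≤ 2*n) :
    gmat A t p ≤ n := by
  calc gmat A t p ≤ gmat A (2*n) p := g_mono_t hA p ht (le_refl _)
    _ ≤ gmat A (2*n) 0 := g_anti_p hA (2*n) (by omega) (le_refl _)
    _ = n := by have := g_even hA n (le_refl n); simpa using this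

/-! ### Tableau side -/

/-- number of entries `< t` in row `i`. -/
noncomputable def lam (μ : Fin n → ℕ) (T : Fin n → Fin m → Fin (2*n)) (t : ℕ) (i : Fin n) : ℕ :=
  (Finset.univ.filter (fun j : Fin m => Cell n m μ i j ∧ (T i j).val < t)).card

noncomputable def wgt (μ : Fin n → ℕ) (T : Fin n → Fin m → Fin (2*n)) (t : ℕ) (q : Fin m) : ℤ :=
  if ∃ i, lam μ T t i = q.val + 1 then 1 else 0

/-- The forward map: tableau to matrix. -/
noncomputable def FA (μ : Fin n → ℕ) (T : Fin n → Fin m → Fin (2*n)) :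
    Fin (2*n) → Fin m → ℤ :=
  fun r q => wgt μ T (2*n - r.val) q - wgt μ T (2*n - 1 - r.val) q

lemma lam_zero (T : Fin n → Fin m → Fin (2*n)) (i : Fin n) : lam μ T 0 i = 0 := by
  unfold lam
  rw [Finset.filter_false_of_mem, Finset.card_empty]
  intro j _
  simp

lemma wgt_zero (T : Fin n → Fin m → Fin (2*n)) (q : Fin m) : wgt μ T 0 q = 0 := by
  unfold wgt
  rw [if_neg]
  push_neg
  intro i
  rw [lam_zero]
  omega

lemma lam_mono (T : Fin n → Fin m → Fin (2*n)) {t t' : ℕ} (h : t ≤ t') (i : Fin n) :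
    lam μ T t i ≤ lam μ T t' i := by
  apply Finset.card_le_card
  intro j hj
  simp only [Finset.mem_filter] at hj ⊢
  exact ⟨hj.1, hj.2.1, by omega⟩

lemma lam_le_mu (hs : Shp n m μ) (T : Fin n → Fin m → Fin (2*n)) (t : ℕ) (i : Fin n) :
    lam μ T t i ≤ μ i := by
  rw [← cell_card hs i]
  apply Finset.card_le_card
  intro j hj
  simp only [Finset.mem_filter] at hj ⊢
  exact ⟨hj.1, hj.2.1⟩

/-- Key prefix property: entries `< t` in a row form a prefix of the row. -/
lemma mem_iff {T : Fin n → Fin m → Fin (2*n)} (hT : IsSST n m μ T) (t : ℕ)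
    {i : Fin n} {j : Fin m} (hc : Cell n m μ i j) :
    (T i j).val < t ↔ j.val < i.val + lam μ T t i := by
  unfold lam
  set s := Finset.univ.filter (fun j : Fin m => Cell n m μ i j ∧ (T i j).val < t) with hsdef
  have hmem : ∀ x : Fin m, x ∈ s ↔ (Cell n m μ i x ∧ (T i x).val < t) := by
    intro x
    rw [hsdef]
    simp [Finset.mem_filter]
  have hdc : ∀ x ∈ s, ∀ (y : Fin m), i.val ≤ y.val → y.val ≤ x.val → y ∈ s := by
    intro x hx y hy1 hy2
    rw [hmem] at hx ⊢
    obtain ⟨⟨hx1, hx2⟩, hx3⟩ := hx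
    have hcy : Cell n m μ i y := ⟨hy1, by omega⟩
    refine ⟨hcy, ?_⟩
    have h5 := hT.2.2.1 i y x hcy ⟨hx1, hx2⟩ (Fin.le_def.mpr hy2)
    have h6 : (T i y).val ≤ (T i x).val := h5
    omega
  have hlow : ∀ x ∈ s, i.val ≤ x.val := by
    intro x hx
    rw [hmem] at hx
    exact hx.1.1
  have himg : (s.image (fun j : Fin m => j.val - i.val)) = Finset.range s.card := by
    have hcard : (s.image (fun j : Fin m => j.val - i.val)).card = s.card := by
      apply Finset.card_image_of_injOn
      intro x hx y hy hxy
      rw [Finset.mem_coe] at hx hy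
      have h1 := hlow x hx
      have h2 := hlow y hy
      simp only at hxy
      exact Fin.ext (by omega)
    rw [← hcard]
    apply downclosed_nat
    intro a ha y hy
    simp only [Finset.mem_image] at ha ⊢
    obtain ⟨x, hx, rfl⟩ := ha
    have hix := hlow x hx
    have hyi : i.val + y < m := by
      have := x.isLt
      omega
    refine ⟨⟨i.val + y, hyi⟩, hdc x hx _ (by simp) (by simp; omega), by simp⟩
  have hiff : ∀ x : Fin m, i.val ≤ x.val → (x ∈ s ↔ x.val - i.val < s.card) := by
    intro x hix
    constructor
    · intro h
      have h2 : x.val - i.val ∈ s.image (fun j : Fin m => j.val - i.val) :=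
        Finset.mem_image_of_mem _ h
      rw [himg, Finset.mem_range] at h2
      exact h2
    · intro h
      have h2 : x.val - i.val ∈ Finset.range s.card := Finset.mem_range.mpr h
      rw [← himg, Finset.mem_image] at h2
      obtain ⟨x', hx', hxv⟩ := h2
      have hix' := hlow x' hx'
      have : x = x' := Fin.ext (by omega)
      rw [this]
      exact hx'
  have hfin := hiff j hc.1
  rw [hmem] at hfin
  have hj := hc.1
  constructor
  · intro h
    have := hfin.1 ⟨hc, h⟩
    omega
  · intro h
    exact (hfin.2 (by omega)).2

/-- every entry of row `i` is at least `2i`. -/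
lemma entry_lb (hs : Shp n m μ) {T : Fin n → Fin m → Fin (2*n)} (hT : IsSST n m μ T)
    {i : Fin n} {j : Fin m} (hc : Cell n m μ i j) : 2 * i.val ≤ (T i j).val := by
  have him : i.val < m := by
    have h1 := hc.1
    have h2 := j.isLt
    omega
  have hcd : Cell n m μ i ⟨i.val, him⟩ :=
    ⟨le_refl i.val, (show i.val < μ i + i.val by have := hs.2.2.1 i; omega)⟩
  have hdiag := hT.2.1 i ⟨i.val, him⟩ rfl hcd
  have hrow := hT.2.2.1 i ⟨i.val, him⟩ j hcd hc (Fin.le_def.mpr hc.1)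
  have hrow2 : (T i ⟨i.val, him⟩).val ≤ (T i j).val := hrow
  rcases hdiag with h | h <;> omega

lemma lam_succ_lt (hs : Shp n m μ) {T : Fin n → Fin m → Fin (2*n)} (hT : IsSST n m μ T)
    (t : ℕ) {i i' : Fin n} (hii : i'.val = i.val + 1) (hpos : 0 < lam μ T t i') :
    lam μ T t i' < lam μ T t i := by
  set ℓ := lam μ T t i' with hl
  have hℓμ : ℓ ≤ μ i' := lam_le_mu hs T t i'
  have hmu' : μ i' < μ i := hs.2.1 (Fin.lt_def.mpr (by omega))
  have hjlt : i.val + ℓ < m := by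
    have := mu_le hs i'
    omega
  set j' : Fin m := ⟨i.val + ℓ, hjlt⟩ with hj'
  have hcell' : Cell n m μ i' j' :=
    ⟨(show i'.val ≤ i.val + ℓ by omega), (show i.val + ℓ < μ i' + i'.val by omega)⟩
  have hTj' : (T i' j').val < t := by
    rw [mem_iff hT t hcell']
    show i.val + ℓ < i'.val + lam μ T t i'
    rw [← hl]
    omega
  have hcell : Cell n m μ i j' :=
    ⟨(show i.val ≤ i.val + ℓ by omega), (show i.val + ℓ < μ i + i.val by omega)⟩
  have hcol := hT.2.2.2.1 i i' j' hcell hcell' (Fin.le_def.mpr (by omega))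
  have hTj : (T i j').val < t := by
    have : (T i j').val ≤ (T i' j').val := hcol
    omega
  rw [mem_iff hT t hcell] at hTj
  have hTj2 : i.val + ℓ < i.val + lam μ T t i := hTj
  omega

lemma lam_strict (hs : Shp n m μ) {T : Fin n → Fin m → Fin (2*n)} (hT : IsSST n m μ T)
    (t : ℕ) : ∀ (d : ℕ) (i i' : Fin n), i'.val = i.val + d + 1 → 0 < lam μ T t i' →
      lam μ T t i' < lam μ T t i := by
  intro d
  induction d with
  | zero => intro i i' h hp; exact lam_succ_lt hs hT t (by omega) hp
  | succ e ih =>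
    intro i i' h hp
    have hmid : i.val + e + 1 < n := by
      have := i'.isLt
      omega
    set imid : Fin n := ⟨i.val + e + 1, hmid⟩ with hmd
    have h1 : lam μ T t i' < lam μ T t imid := lam_succ_lt hs hT t (show i'.val = i.val + e + 1 + 1 by omega) hp
    have h2 : lam μ T t imid < lam μ T t i := ih i imid rfl (by omega)
    omega

lemma lam_anti (hs : Shp n m μ) {T : Fin n → Fin m → Fin (2*n)} (hT : IsSST n m μ T)
    (t : ℕ) {i i' : Fin n} (h : i.val ≤ i'.val) : lam μ T t i' ≤ lam μ T t i := by
  rcases Nat.eq_or_lt_of_le h with heq | hlt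
  · have : i = i' := Fin.ext heq
    rw [this]
  · rcases Nat.eq_zero_or_pos (lam μ T t i') with h0 | hp
    · omega
    · have := lam_strict hs hT t (i'.val - i.val - 1) i i' (by omega) hp
      omega

/-- the number of rows with at least `p+1` entries `< t`. -/
noncomputable def cnt (μ : Fin n → ℕ) (T : Fin n → Fin m → Fin (2*n)) (t p : ℕ) : ℕ :=
  (Finset.univ.filter (fun i : Fin n => p + 1 ≤ lam μ T t i)).card

lemma mem_cnt (hs : Shp n m μ) {T : Fin n → Fin m → Fin (2*n)} (hT : IsSST n m μ T)
    (t p : ℕ) (i : Fin n) : p + 1 ≤ lam μ T t i ↔ i.val < cnt μ T t p := by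
  unfold cnt
  rw [show (p + 1 ≤ lam μ T t i) ↔
      i ∈ Finset.univ.filter (fun i : Fin n => p + 1 ≤ lam μ T t i) by simp]
  apply downclosed_fin
  intro x hx y hxy
  simp only [Finset.mem_filter, Finset.mem_univ, true_and] at hx ⊢
  have := lam_anti hs hT t hxy
  omega

lemma cnt_zero (T : Fin n → Fin m → Fin (2*n)) (p : ℕ) : cnt μ T 0 p = 0 := by
  unfold cnt
  rw [Finset.filter_false_of_mem, Finset.card_empty]
  intro i _
  rw [lam_zero]
  omega

lemma cnt_le_n (T : Fin n → Fin m → Fin (2*n)) (t p : ℕ) : cnt μ T t p ≤ n := by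
  unfold cnt
  calc (Finset.univ.filter _).card ≤ (Finset.univ : Finset (Fin n)).card :=
        Finset.card_le_card (Finset.filter_subset _ _)
    _ = n := by simp

lemma cnt_mono_t (T : Fin n → Fin m → Fin (2*n)) {t t' : ℕ} (h : t ≤ t') (p : ℕ) :
    cnt μ T t p ≤ cnt μ T t' p := by
  apply Finset.card_le_card
  intro i hi
  simp only [Finset.mem_filter, Finset.mem_univ, true_and] at hi ⊢
  have := lam_mono (μ := μ) T h i
  omega

/-- partial sums of the part-indicator equal the counts. -/
lemma cnt_sum (hs : Shp n m μ) {T : Fin n → Fin m → Fin (2*n)} (hT : IsSST n m μ T)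
    (t p : ℕ) :
    (∑ q ∈ Finset.univ.filter (fun q : Fin m => p ≤ q.val), wgt μ T t q)
      = (cnt μ T t p : ℤ) := by
  unfold wgt
  rw [Finset.sum_boole, Finset.filter_filter]
  congr 1
  unfold cnt
  symm
  apply Finset.card_nbij (fun i : Fin n => (⟨lam μ T t i - 1, by
      have h1 := lam_le_mu hs T t i
      have h2 := mu_le_m hs i
      have h3 := hs.2.2.1 i
      omega⟩ : Fin m))
  · intro i hi
    simp only [Finset.mem_coe, Finset.mem_filter, Finset.mem_univ, true_and, Fin.val_mk] at hi ⊢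
    exact ⟨by omega, ⟨i, by omega⟩⟩
  · intro i hi i' hi' hii
    simp only [Finset.coe_filter, Set.mem_setOf_eq, Finset.mem_univ, true_and] at hi hi'
    simp only [Fin.mk.injEq] at hii
    have h3 : lam μ T t i = lam μ T t i' := by omega
    by_contra hne
    have hne' : i.val ≠ i'.val := fun hv => hne (Fin.ext hv)
    rcases Nat.lt_or_ge i.val i'.val with hlt | hge
    · have := lam_strict hs hT t (i'.val - i.val - 1) i i' (by omega) (by omega)
      omega
    · have := lam_strict hs hT t (i.val - i'.val - 1) i' i (by omega) (by omega)
      omega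
  · intro q hq
    simp only [Finset.coe_filter, Set.mem_setOf_eq, Finset.mem_univ, true_and] at hq
    obtain ⟨hpq, i, hi⟩ := hq
    refine ⟨i, ?_, ?_⟩
    · simp only [Finset.coe_filter, Set.mem_setOf_eq, Finset.mem_univ, true_and]
      omega
    · exact Fin.ext (by simp only [Fin.val_mk]; omega)

/-- number of nonempty rows at an even stage. -/
lemma cnt0_even (hs : Shp n m μ) {T : Fin n → Fin m → Fin (2*n)} (hT : IsSST n m μ T)
    (b : ℕ) (hb : b < n) : cnt μ T (2*b+2) 0 = b + 1 := by
  unfold cnt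
  have hfe : (Finset.univ.filter (fun i : Fin n => 0 + 1 ≤ lam μ T (2*b+2) i))
      = Finset.univ.filter (fun i : Fin n => i.val < b + 1) := by
    apply Finset.filter_congr
    intro i _
    constructor
    · intro h
      have hne : (Finset.univ.filter
          (fun j : Fin m => Cell n m μ i j ∧ (T i j).val < 2*b+2)).Nonempty := by
        rw [← Finset.card_pos]
        unfold lam at h
        omega
      obtain ⟨j, hj⟩ := hne
      simp only [Finset.mem_filter, Finset.mem_univ, true_and] at hj
      have := entry_lb hs hT hj.1
      omega
    · intro h
      have him : i.val < m := by
        have h1 := mu_le hs i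
        have h2 := hs.2.2.1 i
        omega
      have hcd : Cell n m μ i ⟨i.val, him⟩ :=
        ⟨le_refl i.val, (show i.val < μ i + i.val by have := hs.2.2.1 i; omega)⟩
      have hdiag := hT.2.1 i ⟨i.val, him⟩ rfl hcd
      have hj : (⟨i.val, him⟩ : Fin m) ∈ Finset.univ.filter
          (fun j : Fin m => Cell n m μ i j ∧ (T i j).val < 2*b+2) := by
        simp only [Finset.mem_filter, Finset.mem_univ, true_and]
        exact ⟨hcd, by rcases hdiag with hd | hd <;> omega⟩
      have : 0 < (Finset.univ.filter
          (fun j : Fin m => Cell n m μ i j ∧ (T i j).val < 2*b+2)).card :=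
        Finset.card_pos.mpr ⟨_, hj⟩
      unfold lam
      omega
  rw [hfe, card_filter_fin_lt (by omega)]

/-- all entries are `< 2n`. -/
lemma lam_full (hs : Shp n m μ) (T : Fin n → Fin m → Fin (2*n)) (i : Fin n) :
    lam μ T (2*n) i = μ i := by
  unfold lam
  rw [← cell_card hs i]
  congr 1
  apply Finset.filter_congr
  intro j _
  have := (T i j).isLt
  constructor
  · exact fun h => h.1
  · exact fun h => ⟨h, by omega⟩

/-- Interlacing: the counts grow by at most one at each stage. -/
lemma cnt_interlace (hs : Shp n m μ) {T : Fin n → Fin m → Fin (2*n)} (hT : IsSST n m μ T)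
    (t p : ℕ) : cnt μ T (t+1) p ≤ cnt μ T t p + 1 := by
  by_contra hcon
  push_neg at hcon
  set c := cnt μ T t p with hc
  set c' := cnt μ T (t+1) p with hc'
  have hc'n : c' ≤ n := cnt_le_n (μ := μ) T (t+1) p
  have hi' : c' - 1 < n := by omega
  set i' : Fin n := ⟨c' - 1, hi'⟩ with hidef
  have hlam' : p + 1 ≤ lam μ T (t+1) i' := by
    rw [mem_cnt hs hT (t+1) p i']
    show c' - 1 < c'
    omega
  have hlamt : lam μ T t i' ≤ p := by
    by_contra hl
    push_neg at hl
    have := (mem_cnt hs hT t p i').mp (by omega)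
    have : c' - 1 < c := this
    omega
  have hpmu : p + 1 ≤ μ i' := le_trans hlam' (lam_le_mu hs T (t+1) i')
  have hjm : i'.val + p < m := by
    have := mu_le hs i'
    omega
  set j' : Fin m := ⟨i'.val + p, hjm⟩ with hjdef
  have hcell' : Cell n m μ i' j' :=
    ⟨(show i'.val ≤ i'.val + p by omega), (show i'.val + p < μ i' + i'.val by omega)⟩
  have hTval : (T i' j').val = t := by
    have h1 : (T i' j').val < t + 1 := by
      rw [mem_iff hT (t+1) hcell']
      show i'.val + p < i'.val + lam μ T (t+1) i'
      omega
    have h2 : ¬ ((T i' j').val < t) := by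
      rw [mem_iff hT t hcell']
      show ¬ (i'.val + p < i'.val + lam μ T t i')
      omega
    omega
  -- the cell diagonally above
  have hi'pos : 1 ≤ i'.val := by
    show 1 ≤ c' - 1
    omega
  have hi0 : i'.val - 1 < n := by omega
  set i0 : Fin n := ⟨i'.val - 1, hi0⟩ with hi0def
  have hj0 : i'.val + p - 1 < m := by omega
  set j0 : Fin m := ⟨i'.val + p - 1, hj0⟩ with hj0def
  have hmu0 : μ i' < μ i0 := hs.2.1 (Fin.lt_def.mpr (by show i'.val - 1 < i'.val; omega))
  have hcell0 : Cell n m μ i0 j0 :=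
    ⟨(show i'.val - 1 ≤ i'.val + p - 1 by omega),
     (show i'.val + p - 1 < μ i0 + (i'.val - 1) by omega)⟩
  have hdg := hT.2.2.2.2 i0 i' j0 j' hcell0 hcell'
      (show i'.val = (i'.val - 1) + 1 by omega)
      (show i'.val + p = (i'.val + p - 1) + 1 by omega)
  have hdg2 : (T i0 j0).val < (T i' j').val := hdg
  rw [hTval] at hdg2
  have hlam0 : p + 1 ≤ lam μ T t i0 := by
    rw [mem_iff hT t hcell0] at hdg2
    have : i'.val + p - 1 < i'.val - 1 + lam μ T t i0 := hdg2
    omega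
  have hfin : i'.val - 1 < c := (mem_cnt hs hT t p i0).mp hlam0
  have hiv : i'.val = c' - 1 := rfl
  omega

lemma FA_colsum (T : Fin n → Fin m → Fin (2*n)) (j : Fin (2*n)) (q : Fin m) :
    (∑ r ∈ Finset.univ.filter (fun r : Fin (2*n) => j ≤ r), FA μ T r q)
      = wgt μ T (2*n - j.val) q := by
  have h := sum_filter_telescope (fun t => wgt μ T t q) j
  unfold FA
  rw [h, wgt_zero, sub_zero]

lemma FA_rowsum (hs : Shp n m μ) {T : Fin n → Fin m → Fin (2*n)} (hT : IsSST n m μ T)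
    (r : Fin (2*n)) (p : ℕ) :
    (∑ q ∈ Finset.univ.filter (fun q : Fin m => p ≤ q.val), FA μ T r q)
      = (cnt μ T (2*n - r.val) p : ℤ) - (cnt μ T (2*n - 1 - r.val) p : ℤ) := by
  unfold FA
  rw [Finset.sum_sub_distrib, cnt_sum hs hT, cnt_sum hs hT]

lemma wgt_total (hs : Shp n m μ) {T : Fin n → Fin m → Fin (2*n)} (hT : IsSST n m μ T)
    (t : ℕ) : (∑ q : Fin m, wgt μ T t q) = (cnt μ T t 0 : ℤ) := by
  rw [← cnt_sum hs hT t 0]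
  apply Finset.sum_congr
  · symm
    apply Finset.filter_true_of_mem
    intro q _
    omega
  · intros
    rfl

lemma FA_isUASM (hs : Shp n m μ) {T : Fin n → Fin m → Fin (2*n)} (hT : IsSST n m μ T) :
    IsUASM n m μ (FA μ T) := by
  have hn := hs.1
  refine ⟨?_, ?_, ?_, ?_, ?_⟩
  · -- UA1
    intro r q
    unfold FA wgt
    split_ifs <;> norm_num
  · -- UA2
    intro r p
    have hfe : (Finset.univ.filter (fun q : Fin m => p ≤ q))
        = Finset.univ.filter (fun q : Fin m => p.val ≤ q.val) := by
      apply Finset.filter_congr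
      intro q _
      exact Fin.le_def
    rw [hfe, FA_rowsum hs hT]
    have e : 2*n - r.val = (2*n - 1 - r.val) + 1 := by
      have := r.isLt
      omega
    rw [e]
    have h1 := cnt_mono_t (μ := μ) T (show 2*n - 1 - r.val ≤ (2*n - 1 - r.val) + 1 by omega) p.val
    have h2 := cnt_interlace hs hT (2*n - 1 - r.val) p.val
    omega
  · -- UA3
    intro j q
    rw [FA_colsum T j q]
    unfold wgt
    split_ifs <;> simp
  · -- UA4
    intro k
    have hk := k.isLt
    have hpt : ∀ q : Fin m,
        FA μ T ⟨2*k.val, by omega⟩ q + FA μ T ⟨2*k.val+1, by omega⟩ q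
          = wgt μ T (2*n - 2*k.val) q - wgt μ T (2*n - 2*k.val - 2) q := by
      intro q
      unfold FA
      have e1 : 2*n - (⟨2*k.val, by omega⟩ : Fin (2*n)).val = 2*n - 2*k.val := rfl
      have e2 : 2*n - 1 - (⟨2*k.val, by omega⟩ : Fin (2*n)).val = 2*n - 2*k.val - 1 := by
        show 2*n - 1 - 2*k.val = 2*n - 2*k.val - 1
        omega
      have e3 : 2*n - (⟨2*k.val+1, by omega⟩ : Fin (2*n)).val = 2*n - 2*k.val - 1 := by
        show 2*n - (2*k.val+1) = 2*n - 2*k.val - 1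
        omega
      have e4 : 2*n - 1 - (⟨2*k.val+1, by omega⟩ : Fin (2*n)).val = 2*n - 2*k.val - 2 := by
        show 2*n - 1 - (2*k.val+1) = 2*n - 2*k.val - 2
        omega
      rw [e1, e2, e3, e4]
      ring
    refine Eq.trans (Finset.sum_congr rfl (fun q _ => hpt q)) ?_
    rw [Finset.sum_sub_distrib, wgt_total hs hT, wgt_total hs hT]
    have h1 : cnt μ T (2*n - 2*k.val) 0 = n - k.val := by
      rw [show 2*n - 2*k.val = 2*(n - k.val - 1) + 2 by omega]
      rw [cnt0_even hs hT (n - k.val - 1) (by omega)]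
      omega
    rcases Nat.lt_or_ge (k.val + 1) n with hlt | hge
    · have h2 : cnt μ T (2*n - 2*k.val - 2) 0 = n - k.val - 1 := by
        rw [show 2*n - 2*k.val - 2 = 2*(n - k.val - 2) + 2 by omega]
        rw [cnt0_even hs hT (n - k.val - 2) (by omega)]
        omega
      rw [h1, h2]
      push_cast
      omega
    · have hkn : k.val = n - 1 := by omega
      have h2 : cnt μ T (2*n - 2*k.val - 2) 0 = 0 := by
        rw [show 2*n - 2*k.val - 2 = 0 by omega]
        exact cnt_zero (μ := μ) T 0
      rw [h1, h2]
      push_cast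
      omega
  · -- UA5
    intro q
    have h0 : (Finset.univ : Finset (Fin (2*n)))
        = Finset.univ.filter (fun i : Fin (2*n) => (⟨0, by omega⟩ : Fin (2*n)) ≤ i) := by
      symm
      apply Finset.filter_true_of_mem
      intro i _
      exact Fin.le_def.mpr (show 0 ≤ i.val from Nat.zero_le _)
    rw [show (∑ i, FA μ T i q) = ∑ i ∈ Finset.univ.filter
          (fun i : Fin (2*n) => (⟨0, by omega⟩ : Fin (2*n)) ≤ i), FA μ T i q by rw [← h0]]
    rw [FA_colsum T ⟨0, by omega⟩ q]
    unfold wgt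
    simp only [Nat.sub_zero, lam_full hs T]

/-! ### The backward map -/

/-- The backward map: matrix to tableau.  Entry `(i,j)` is the least stage at
which the corner sums reach level `i+1` at column-offset `j-i`. -/
noncomputable def GT (hn : 0 < n) (μ : Fin n → ℕ) (A : Fin (2*n) → Fin m → ℤ) :
    Fin n → Fin m → Fin (2*n) :=
  fun i j =>
    if hex : ∃ a : ℕ, ((i.val : ℤ) + 1 ≤ gmat A (a+1) (j.val - i.val)) ∧ a < 2*n
        ∧ Cell n m μ i j then
      ⟨Nat.find hex, (Nat.find_spec hex).2.1⟩
    else ⟨0, by omega⟩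

lemma GT_ex (hn : 0 < n) {A : Fin (2*n) → Fin m → ℤ} (hA : IsUASM n m μ A)
    (hs : Shp n m μ) {i : Fin n} {j : Fin m} (hc : Cell n m μ i j) :
    ∃ a : ℕ, ((i.val : ℤ) + 1 ≤ gmat A (a+1) (j.val - i.val)) ∧ a < 2*n
        ∧ Cell n m μ i j := by
  refine ⟨2*n - 1, ?_, by omega, hc⟩
  rw [show 2*n - 1 + 1 = 2*n by omega]
  rw [g_full_iff hA hs (j.val - i.val) i]
  have := hc.1
  have := hc.2
  omega

lemma GT_val_lt_iff (hn : 0 < n) {A : Fin (2*n) → Fin m → ℤ} (hA : IsUASM n m μ A)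
    (hs : Shp n m μ) {i : Fin n} {j : Fin m} (hc : Cell n m μ i j) (t : ℕ) (ht : t ≤ 2*n) :
    ((GT hn μ A i j).val < t) ↔ ((i.val : ℤ) + 1 ≤ gmat A t (j.val - i.val)) := by
  unfold GT
  rw [dif_pos (GT_ex hn hA hs hc)]
  rw [show ((⟨Nat.find (GT_ex hn hA hs hc), _⟩ : Fin (2*n)) : ℕ) = Nat.find (GT_ex hn hA hs hc)
    from rfl]
  rw [Nat.find_lt_iff]
  constructor
  · rintro ⟨a, hat, hga, halt, -⟩
    exact le_trans hga (g_mono_t hA (j.val - i.val) (by omega) ht)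
  · intro hg
    rcases t with _ | s
    · rw [g_zero] at hg
      have := i.val
      omega
    · exact ⟨s, by omega, hg, by omega, hc⟩

lemma GT_isSST (hn : 0 < n) {A : Fin (2*n) → Fin m → ℤ} (hA : IsUASM n m μ A)
    (hs : Shp n m μ) : IsSST n m μ (GT hn μ A) := by
  refine ⟨?_, ?_, ?_, ?_, ?_⟩
  · -- outside cells
    intro i j hc
    unfold GT
    rw [dif_neg (fun hex => hc hex.choose_spec.2.2)]
  · -- diagonal entries
    intro i j hij hc
    have hd : j.val - i.val = 0 := by omega
    have h1 : (GT hn μ A i j).val < 2*i.val + 2 := by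
      rw [GT_val_lt_iff hn hA hs hc _ (by have := i.isLt; omega), hd]
      rw [show 2*i.val + 2 = 2*(i.val+1) by ring, g_even hA (i.val+1) (by have := i.isLt; omega)]
      push_cast
      omega
    have h2 : ¬ ((GT hn μ A i j).val < 2*i.val) := by
      rw [GT_val_lt_iff hn hA hs hc _ (by have := i.isLt; omega), hd]
      rw [g_even hA i.val (by have := i.isLt; omega)]
      push_cast
      omega
    omega
  · -- rows weakly increase
    intro i j j' hc hc' hjj
    set w := (GT hn μ A i j').val with hw
    have hwlt : w < 2*n := (GT hn μ A i j').isLt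
    have h1 : (GT hn μ A i j').val < w + 1 := by omega
    rw [GT_val_lt_iff hn hA hs hc' (w+1) (by omega)] at h1
    apply Fin.le_def.mpr
    have h2 : (GT hn μ A i j).val < w + 1 := by
      rw [GT_val_lt_iff hn hA hs hc (w+1) (by omega)]
      refine le_trans h1 (g_anti_p hA (w+1) ?_ (by omega))
      have := Fin.le_def.mp hjj
      omega
    omega
  · -- columns weakly increase
    intro i i' j hc hc' hii
    set w := (GT hn μ A i' j).val with hw
    have hwlt : w < 2*n := (GT hn μ A i' j).isLt
    have h1 : (GT hn μ A i' j).val < w + 1 := by omega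
    rw [GT_val_lt_iff hn hA hs hc' (w+1) (by omega)] at h1
    apply Fin.le_def.mpr
    have h2 : (GT hn μ A i j).val < w + 1 := by
      rw [GT_val_lt_iff hn hA hs hc (w+1) (by omega)]
      have hstep := g_anti_step hA (w+1) (j.val - i'.val) (i'.val - i.val) (by omega)
      have hle := Fin.le_def.mp hii
      have hij' := hc'.1
      rw [show j.val - i.val = (j.val - i'.val) + (i'.val - i.val) by omega]
      have hc1 : ((i'.val : ℤ) + 1) - ((i'.val : ℤ) - i.val) ≤ gmat A (w+1) (j.val - i'.val)
          - ((i'.val : ℤ) - i.val) := by omega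
      push_cast at hstep ⊢
      omega
    omega
  · -- diagonals strictly increase
    intro i i' j j' hc hc' hii hjj
    set w := (GT hn μ A i' j').val with hw
    have hwlt : w < 2*n := (GT hn μ A i' j').isLt
    have h1 : (GT hn μ A i' j').val < w + 1 := by omega
    rw [GT_val_lt_iff hn hA hs hc' (w+1) (by omega)] at h1
    have hdd : j'.val - i'.val = j.val - i.val := by
      have := hc.1
      omega
    rw [hdd] at h1
    apply Fin.lt_def.mpr
    show (GT hn μ A i j).val < w
    rcases Nat.eq_zero_or_pos w with hw0 | hwpos
    · exfalso
      have hb1 : gmat A 1 (j.val - i.val) ≤ gmat A 1 0 :=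
        g_anti_p hA 1 (by omega) (by omega)
      have hb2 : gmat A 1 0 ≤ gmat A 2 0 := g_mono_t hA 0 (by omega) (by omega)
      have hb3 : gmat A 2 0 = 1 := by
        have := g_even hA 1 (by omega)
        simpa using this
      rw [hw0] at h1
      simp only [Nat.zero_add] at h1
      omega
    · rw [GT_val_lt_iff hn hA hs hc w (by omega)]
      have hstep := (g_step_t hA w (j.val - i.val) (by omega)).2
      omega

/-- the row lengths of `GT A` are determined by the corner sums. -/
lemma lam_GT (hn : 0 < n) {A : Fin (2*n) → Fin m → ℤ} (hA : IsUASM n m μ A)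
    (hs : Shp n m μ) (t : ℕ) (ht : t ≤ 2*n) (i : Fin n) :
    lam μ (GT hn μ A) t i
      = (Finset.univ.filter (fun p' : Fin m => (i.val : ℤ) + 1 ≤ gmat A t p'.val)).card := by
  unfold lam
  apply Finset.card_nbij (fun j : Fin m => (⟨j.val - i.val, by have := j.isLt; omega⟩ : Fin m))
  · intro j hj
    simp only [Finset.mem_coe, Finset.mem_filter, Finset.mem_univ, true_and] at hj ⊢
    obtain ⟨hc, hv⟩ := hj
    rw [GT_val_lt_iff hn hA hs hc t ht] at hv
    exact hv
  · intro j hj j' hj' hjj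
    simp only [Finset.coe_filter, Set.mem_setOf_eq, Finset.mem_univ, true_and] at hj hj'
    simp only [Fin.mk.injEq] at hjj
    have h1 := hj.1.1
    have h2 := hj'.1.1
    exact Fin.ext (by omega)
  · intro p' hp'
    simp only [Finset.coe_filter, Set.mem_setOf_eq, Finset.mem_univ, true_and] at hp'
    have hmu : p'.val < μ i := by
      rw [← g_full_iff hA hs p'.val i]
      exact le_trans hp' (g_mono_t hA p'.val ht (le_refl _))
    have hjm : i.val + p'.val < m := by
      have := mu_le hs i
      omega
    have hcell : Cell n m μ i ⟨i.val + p'.val, hjm⟩ :=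
      ⟨(show i.val ≤ i.val + p'.val by omega), (show i.val + p'.val < μ i + i.val by omega)⟩
    refine ⟨⟨i.val + p'.val, hjm⟩, ?_, ?_⟩
    · simp only [Finset.coe_filter, Set.mem_setOf_eq, Finset.mem_univ, true_and]
      refine ⟨hcell, ?_⟩
      rw [GT_val_lt_iff hn hA hs hcell t ht]
      rw [show (⟨i.val + p'.val, hjm⟩ : Fin m).val - i.val = p'.val by
        show i.val + p'.val - i.val = p'.val
        omega]
      exact hp'
    · exact Fin.ext (by show i.val + p'.val - i.val = p'.val; omega)

/-- Crux: the counts of the tableau `GT A` recover the corner sums of `A`. -/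
lemma crux (hn : 0 < n) {A : Fin (2*n) → Fin m → ℤ} (hA : IsUASM n m μ A)
    (hs : Shp n m μ) (t : ℕ) (ht : t ≤ 2*n) (p : ℕ) :
    (cnt μ (GT hn μ A) t p : ℤ) = gmat A t p := by
  have hT := GT_isSST hn hA hs
  rcases Nat.lt_or_ge p m with hp | hp
  · -- the membership criterion in the inner filter
    have hdc : ∀ i : Fin n, ∀ x : Fin m,
        x ∈ Finset.univ.filter (fun p' : Fin m => (i.val : ℤ) + 1 ≤ gmat A t p'.val)
        ↔ x.val < lam μ (GT hn μ A) t i := by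
      intro i x
      rw [lam_GT hn hA hs t ht i]
      apply downclosed_fin
      intro y hy z hzy
      simp only [Finset.mem_filter, Finset.mem_univ, true_and] at hy ⊢
      exact le_trans hy (g_anti_p hA t hzy ht)
    have hiff : ∀ i : Fin n, (p + 1 ≤ lam μ (GT hn μ A) t i
        ↔ (i.val : ℤ) + 1 ≤ gmat A t p) := by
      intro i
      have := hdc i ⟨p, hp⟩
      simp only [Finset.mem_filter, Finset.mem_univ, true_and] at this
      omega
    unfold cnt
    rw [Finset.filter_congr (fun i _ => by
      rw [show ((p + 1 ≤ lam μ (GT hn μ A) t i) ↔ ((i.val : ℤ) + 1 ≤ gmat A t p))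
        from hiff i])]
    have h0 : 0 ≤ gmat A t p := g_nonneg hA t p ht
    have h1 : gmat A t p ≤ n := g_le_n hA t p ht
    set v := (gmat A t p).toNat with hv
    have hveq : (v : ℤ) = gmat A t p := Int.toNat_of_nonneg h0
    have hfe : Finset.univ.filter (fun i : Fin n => (i.val : ℤ) + 1 ≤ gmat A t p)
        = Finset.univ.filter (fun i : Fin n => i.val < v) := by
      apply Finset.filter_congr
      intro i _
      omega
    rw [hfe, card_filter_fin_lt (by omega)]
    omega
  · -- `p ≥ m`: both sides vanish
    rw [g_zero_p A t p hp]
    unfold cnt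
    rw [Finset.filter_false_of_mem, Finset.card_empty]
    · simp
    · intro i _
      have h1 := lam_le_mu hs (GT hn μ A) t i
      have h2 := mu_le_m hs i
      omega

/-- Any matrix is recovered from its corner sums. -/
lemma A_recover (A : Fin (2*n) → Fin m → ℤ) (r : Fin (2*n)) (q : Fin m) :
    A r q = (gmat A (2*n - r.val) q.val - gmat A (2*n - r.val) (q.val+1))
          - (gmat A (2*n - 1 - r.val) q.val - gmat A (2*n - 1 - r.val) (q.val+1)) := by
  have hr := r.isLt
  have hq := q.isLt
  rw [g_succ_p A (2*n - r.val) q.val hq, g_succ_p A (2*n - 1 - r.val) q.val hq]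
  have e1 : Finset.univ.filter (fun r' : Fin (2*n) => 2*n - (2*n - r.val) ≤ r'.val)
      = insert r (Finset.univ.filter (fun r' : Fin (2*n) => 2*n - (2*n - 1 - r.val) ≤ r'.val)) := by
    ext r'
    simp only [Finset.mem_filter, Finset.mem_univ, true_and, Finset.mem_insert, Fin.ext_iff]
    omega
  rw [e1, Finset.sum_insert (by simp; omega)]
  ring

/-- Injectivity of the forward map. -/
lemma FA_inj (hs : Shp n m μ) {T T' : Fin n → Fin m → Fin (2*n)}
    (hT : IsSST n m μ T) (hT' : IsSST n m μ T') (h : FA μ T = FA μ T') : T = T' := by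
  have hn := hs.1
  have hw : ∀ t, 1 ≤ t → t ≤ 2*n → ∀ q : Fin m, wgt μ T t q = wgt μ T' t q := by
    intro t h1 h2 q
    have hj : 2*n - t < 2*n := by omega
    have e1 := FA_colsum (μ := μ) T ⟨2*n - t, hj⟩ q
    have e2 := FA_colsum (μ := μ) T' ⟨2*n - t, hj⟩ q
    have e : 2*n - ((⟨2*n - t, hj⟩ : Fin (2*n)) : ℕ) = t := by
      show 2*n - (2*n - t) = t
      omega
    rw [e] at e1 e2
    rw [← e1, ← e2, h]
  have hcnt : ∀ t, t ≤ 2*n → ∀ p : ℕ, cnt μ T t p = cnt μ T' t p := by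
    intro t ht p
    rcases Nat.eq_zero_or_pos t with rfl | htpos
    · rw [cnt_zero, cnt_zero]
    · have e1 := cnt_sum hs hT t p
      have e2 := cnt_sum hs hT' t p
      have e3 : (∑ q ∈ Finset.univ.filter (fun q : Fin m => p ≤ q.val), wgt μ T t q)
          = ∑ q ∈ Finset.univ.filter (fun q : Fin m => p ≤ q.val), wgt μ T' t q :=
        Finset.sum_congr rfl (fun q _ => hw t htpos ht q)
      omega
  have hlam : ∀ t, t ≤ 2*n → ∀ i, lam μ T t i = lam μ T' t i := by
    intro t ht i
    have hle : ∀ (S S' : Fin n → Fin m → Fin (2*n)) (hS : IsSST n m μ S)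
        (hS' : IsSST n m μ S'), (∀ p : ℕ, cnt μ S t p = cnt μ S' t p) →
        lam μ S t i ≤ lam μ S' t i := by
      intro S S' hS hS' hc
      rcases Nat.eq_zero_or_pos (lam μ S t i) with h0 | hpos
      · omega
      · have h1 := (mem_cnt hs hS t (lam μ S t i - 1) i).mp (by omega)
        rw [hc] at h1
        have h2 := (mem_cnt hs hS' t (lam μ S t i - 1) i).mpr h1
        omega
    exact Nat.le_antisymm (hle T T' hT hT' (fun p => hcnt t ht p))
      (hle T' T hT' hT (fun p => (hcnt t ht p).symm))
  funext i j
  by_cases hc : Cell n m μ i j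
  · apply Fin.ext
    have b1 := (T i j).isLt
    have b2 := (T' i j).isLt
    have d1 : (T' i j).val < (T' i j).val + 1 := by omega
    rw [mem_iff hT' ((T' i j).val + 1) hc, ← hlam ((T' i j).val + 1) (by omega) i,
      ← mem_iff hT ((T' i j).val + 1) hc] at d1
    have d2 : (T i j).val < (T i j).val + 1 := by omega
    rw [mem_iff hT ((T i j).val + 1) hc, hlam ((T i j).val + 1) (by omega) i,
      ← mem_iff hT' ((T i j).val + 1) hc] at d2
    omega
  · exact Fin.ext (by rw [hT.1 i j hc, hT'.1 i j hc])

/-- Injectivity of the backward map. -/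
lemma GT_inj (hn : 0 < n) {A A' : Fin (2*n) → Fin m → ℤ}
    (hA : IsUASM n m μ A) (hA' : IsUASM n m μ A') (hs : Shp n m μ)
    (h : GT hn μ A = GT hn μ A') : A = A' := by
  have hg : ∀ t, t ≤ 2*n → ∀ p : ℕ, gmat A t p = gmat A' t p := by
    intro t ht p
    rw [← crux hn hA hs t ht p, ← crux hn hA' hs t ht p, h]
  funext r q
  have hr := r.isLt
  rw [A_recover A r q, A_recover A' r q,
    hg (2*n - r.val) (by omega) q.val, hg (2*n - r.val) (by omega) (q.val + 1),
    hg (2*n - 1 - r.val) (by omega) q.val, hg (2*n - 1 - r.val) (by omega) (q.val + 1)]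

end SU

/-- There is a bijection between the `sp(2n)`-standard shifted tableaux of
shape `μ` and the `2n × m` `μ`-UASMs, where `m = μ₁`. -/
theorem sst_equiv_uasm (n m : ℕ) (hn : 0 < n) (μ : Fin n → ℕ)
    (hμ : StrictAnti μ) (hpos : ∀ i, 0 < μ i) (hm : m = μ ⟨0, hn⟩) :
    Nonempty
      ({T : Fin n → Fin m → Fin (2*n) // IsSST n m μ T} ≃
       {A : Fin (2*n) → Fin m → ℤ // IsUASM n m μ A}) := by
  have hs : SU.Shp n m μ := ⟨hn, hμ, hpos, fun h0 => hm⟩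
  exact Function.Embedding.antisymm
    ⟨fun T => ⟨SU.FA μ T.1, SU.FA_isUASM hs T.2⟩, by
      intro T T' hTT
      simp only [Subtype.mk.injEq] at hTT
      exact Subtype.ext (SU.FA_inj hs T.2 T'.2 hTT)⟩
    ⟨fun A => ⟨SU.GT hn μ A.1, SU.GT_isSST hn A.2 hs⟩, by
      intro A A' hAA
      simp only [Subtype.mk.injEq] at hAA
      exact Subtype.ext (SU.GT_inj hn A.2 A'.2 hs hAA)⟩
end

section
/- The number of sp(2n)-standard shifted tableaux of staircase shape δ = (n, n−1, ..., 1) equals the number of 2n×n U-turn alternating sign matrices. -/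
open scoped Classical

open Finset

namespace HKaux

lemma sum_filter_val {M : Type*} [AddCommMonoid M] (N : ℕ) (P : ℕ → Prop)
    [DecidablePred P] (f : ℕ → M) :
    ∑ x ∈ univ.filter (fun x : Fin N => P x.val), f x.val
      = ∑ x ∈ (range N).filter P, f x := by
  rw [sum_filter, sum_filter, ← Fin.sum_univ_eq_sum_range (fun i => if P i then f i else 0) N]

lemma card_filter_val (N : ℕ) (P : ℕ → Prop) [DecidablePred P] :
    (univ.filter (fun x : Fin N => P x.val)).card = ((range N).filter P).card := by
  have := sum_filter_val (M := ℕ) N P (fun _ => 1)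
  rw [Finset.sum_const, Finset.sum_const] at this
  simpa using this

lemma card_filter_ge_lt (n l u : ℕ) (hu : u ≤ n) :
    (univ.filter (fun x : Fin n => l ≤ x.val ∧ x.val < u)).card = u - l := by
  rw [card_filter_val n (fun x => l ≤ x ∧ x < u)]
  have : (range n).filter (fun x => l ≤ x ∧ x < u) = Finset.Ico l u := by
    ext x; simp [Finset.mem_Ico]; omega
  rw [this, Nat.card_Ico]

lemma card_filter_lt (n k : ℕ) (hk : k ≤ n) :
    (univ.filter (fun x : Fin n => x.val < k)).card = k := by
  rw [card_filter_val n (fun x => x < k)]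
  have : (range n).filter (fun x => x < k) = Finset.range k := by
    ext x; simp; omega
  rw [this, Finset.card_range]

lemma card_filter_ge (n p : ℕ) :
    (univ.filter (fun x : Fin n => p ≤ x.val)).card = n - p := by
  rw [card_filter_val]
  have : (range n).filter (fun x => p ≤ x) = Finset.Ico p n := by
    ext x; simp [Finset.mem_Ico]; omega
  rw [this, Nat.card_Ico]

lemma filter_val_split {N t : ℕ} (ht : t < N) (f : Fin N → ℤ) :
    ∑ x ∈ univ.filter (fun x : Fin N => t ≤ x.val), f x
      = f ⟨t, ht⟩ + ∑ x ∈ univ.filter (fun x : Fin N => t + 1 ≤ x.val), f x := by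
  have h : univ.filter (fun x : Fin N => t ≤ x.val)
      = insert ⟨t, ht⟩ (univ.filter (fun x : Fin N => t + 1 ≤ x.val)) := by
    ext x
    simp only [mem_filter, mem_univ, true_and, mem_insert]
    constructor
    · intro hx
      rcases eq_or_lt_of_le hx with h | h
      · left; exact Fin.ext h.symm
      · right; omega
    · rintro (rfl | hx)
      · exact le_refl t
      · omega
  rw [h, sum_insert]
  simp

lemma filter_val_empty {N t : ℕ} (ht : N ≤ t) (f : Fin N → ℤ) :
    ∑ x ∈ univ.filter (fun x : Fin N => t ≤ x.val), f x = 0 := by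
  apply Finset.sum_eq_zero
  intro x hx
  simp only [mem_filter] at hx
  exact absurd hx.2 (by omega)

/-- A downward-closed subset of `range L` is an initial segment. -/
lemma downset_mem_iff {L : ℕ} {S : Finset ℕ} (_hS : S ⊆ range L)
    (hdown : ∀ a ∈ S, ∀ b ≤ a, b ∈ S) (v : ℕ) : v ∈ S ↔ v < S.card := by
  constructor
  · intro hv
    have h1 : range (v + 1) ⊆ S := by
      intro b hb
      exact hdown v hv b (by simpa using Nat.lt_succ_iff.mp (mem_range.mp hb))
    calc v < v + 1 := Nat.lt_succ_self v
      _ = (range (v+1)).card := by simp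
      _ ≤ S.card := card_le_card h1
  · intro hv
    by_contra hmem
    have h2 : S ⊆ range v := by
      intro a ha
      rw [mem_range]
      by_contra h
      exact hmem (hdown a ha v (by omega))
    have := card_le_card h2
    simp at this
    omega

lemma telescope_Ico (f : ℕ → ℤ) {m n : ℕ} (h : m ≤ n) :
    ∑ i ∈ Ico m n, (f i - f (i + 1)) = f m - f n := by
  rw [Finset.sum_Ico_eq_sub _ h, Finset.sum_range_sub' f, Finset.sum_range_sub' f]
  ring

end HKaux

namespace HK
open HKaux

variable {n : ℕ}

noncomputable def bA (A : Fin (2*n) → Fin n → ℤ) (j : ℕ) (q : Fin n) : ℤ :=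
  ∑ i ∈ univ.filter (fun i : Fin (2*n) => j ≤ i.val), A i q

noncomputable def NC (A : Fin (2*n) → Fin n → ℤ) (a p : ℕ) : ℕ :=
  (univ.filter (fun q : Fin n => p ≤ q.val ∧ bA A (2*n - a) q = 1)).card

lemma bA_cast (A : Fin (2*n) → Fin n → ℤ) {x y : ℕ} (h : x = y) (q : Fin n) :
    bA A x q = bA A y q := by rw [h]

lemma bA_split (A : Fin (2*n) → Fin n → ℤ) {j : ℕ} (hj : j < 2*n) (q : Fin n) :
    bA A j q = A ⟨j, hj⟩ q + bA A (j+1) q :=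
  filter_val_split hj (fun i => A i q)

lemma bA_top (A : Fin (2*n) → Fin n → ℤ) {j : ℕ} (hj : 2*n ≤ j) (q : Fin n) :
    bA A j q = 0 := filter_val_empty hj (fun i => A i q)

lemma A_eq_bA_sub (A : Fin (2*n) → Fin n → ℤ) (i : Fin (2*n)) (q : Fin n) :
    A i q = bA A i.val q - bA A (i.val+1) q := by
  rw [bA_split A i.isLt q]
  simp

section withA
variable {A : Fin (2*n) → Fin n → ℤ} (hA : IsUASM n n (fun i => n - i.val) A)
include hA

lemma bA01 (j : ℕ) (q : Fin n) : bA A j q = 0 ∨ bA A j q = 1 := by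
  rcases le_or_gt (2*n) j with h | h
  · left; exact bA_top A h q
  · have h2 := hA.2.2.1 ⟨j, h⟩ q
    have heq : (univ.filter (fun i : Fin (2*n) => (⟨j, h⟩ : Fin (2*n)) ≤ i))
        = univ.filter (fun i : Fin (2*n) => j ≤ i.val) := by
      apply filter_congr; intro i _; simp [Fin.le_def]
    rw [heq] at h2
    exact h2

lemma rowsum01 (i : Fin (2*n)) (p : ℕ) :
    (∑ q ∈ univ.filter (fun q : Fin n => p ≤ q.val), A i q) = 0 ∨
    (∑ q ∈ univ.filter (fun q : Fin n => p ≤ q.val), A i q) = 1 := by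
  rcases le_or_gt n p with h | h
  · left; exact filter_val_empty h (fun q => A i q)
  · have h2 := hA.2.1 i ⟨p, h⟩
    have heq : (univ.filter (fun q : Fin n => (⟨p, h⟩ : Fin n) ≤ q))
        = univ.filter (fun q : Fin n => p ≤ q.val) := by
      apply filter_congr; intro q _; simp [Fin.le_def]
    rw [heq] at h2
    exact h2

lemma NC_cast (a p : ℕ) :
    ((NC A a p : ℤ)) = ∑ q ∈ univ.filter (fun q : Fin n => p ≤ q.val), bA A (2*n - a) q := by
  have h1 : ∀ q ∈ univ.filter (fun q : Fin n => p ≤ q.val),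
      bA A (2*n - a) q = if bA A (2*n - a) q = 1 then (1:ℤ) else 0 := by
    intro q _
    rcases bA01 hA (2*n-a) q with h | h <;> simp [h]
  rw [Finset.sum_congr rfl h1, Finset.sum_boole, Finset.filter_filter]
  rfl

lemma NC_empty (a : ℕ) {p : ℕ} (hp : n ≤ p) : NC A a p = 0 := by
  have : (NC A a p : ℤ) = 0 := by
    rw [NC_cast hA]
    exact filter_val_empty hp _
  exact_mod_cast this

omit hA in
lemma NC_congr {A' : Fin (2*n) → Fin n → ℤ} {a a' : ℕ} (h : 2*n - a = 2*n - a') (p : ℕ) :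
    NC A' a p = NC A' a' p := by unfold NC; rw [h]

lemma NC_step_p {a p : ℕ} (hp : p < n) :
    (NC A a p : ℤ) = bA A (2*n - a) ⟨p, hp⟩ + NC A a (p+1) := by
  rw [NC_cast hA, NC_cast hA]
  exact filter_val_split hp _

lemma NC_mono_p {a : ℕ} {p p' : ℕ} (h : p ≤ p') : NC A a p' ≤ NC A a p := by
  apply card_le_card
  intro q hq
  simp only [mem_filter] at hq ⊢
  exact ⟨hq.1, by omega, hq.2.2⟩

lemma NC_le (a p : ℕ) : NC A a p ≤ n - p := by
  calc NC A a p ≤ (univ.filter (fun q : Fin n => p ≤ q.val)).card := by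
        apply card_le_card; intro q hq; simp only [mem_filter] at hq ⊢; exact ⟨hq.1, hq.2.1⟩
    _ = n - p := card_filter_ge n p

lemma NC_lower_p (a p d : ℕ) : NC A a p ≤ NC A a (p+d) + d := by
  induction d with
  | zero => simp
  | succ e ih =>
    rcases le_or_gt n (p+e) with h | h
    · have h1 := NC_le hA a p
      have h2 : NC A a (p+(e+1)) = NC A a (p+(e+1)) := rfl
      omega
    · have hs := NC_step_p hA (a := a) h
      rcases bA01 hA (2*n-a) ⟨p+e, h⟩ with h1 | h1 <;> rw [h1] at hs <;>
        [skip ; skip] <;>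
      · have : NC A a (p+e) ≤ NC A a (p+e+1) + 1 := by omega
        have he : p + (e+1) = (p+e)+1 := by omega
        rw [he]
        omega

lemma NC_step_a {a : ℕ} (ha : a < 2*n) (p : ℕ) :
    (NC A (a+1) p : ℤ)
      = (∑ q ∈ univ.filter (fun q : Fin n => p ≤ q.val), A ⟨2*n - a - 1, by omega⟩ q)
        + NC A a p := by
  rw [NC_cast hA, NC_cast hA]
  have h1 : ∀ q ∈ univ.filter (fun q : Fin n => p ≤ q.val),
      bA A (2*n - (a+1)) q = A ⟨2*n - a - 1, by omega⟩ q + bA A (2*n - a) q := by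
    intro q _
    calc bA A (2*n - (a+1)) q = bA A (2*n - a - 1) q := bA_cast A (by omega) q
      _ = A ⟨2*n - a - 1, by omega⟩ q + bA A (2*n - a - 1 + 1) q := bA_split A (by omega) q
      _ = A ⟨2*n - a - 1, by omega⟩ q + bA A (2*n - a) q :=
          congrArg (fun z => A ⟨2*n - a - 1, by omega⟩ q + z) (bA_cast A (by omega) q)
  rw [Finset.sum_congr rfl h1, Finset.sum_add_distrib]

lemma NC_step_all (a p : ℕ) :
    NC A a p ≤ NC A (a+1) p ∧ NC A (a+1) p ≤ NC A a p + 1 := by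
  rcases le_or_gt (2*n) a with h | h
  · rw [NC_congr (by omega : 2*n - (a+1) = 2*n - a) p]
    omega
  · have h2 := NC_step_a hA h p
    rcases rowsum01 hA ⟨2*n - a - 1, by omega⟩ p with h3 | h3 <;> rw [h3] at h2 <;>
      constructor <;> omega

lemma NC_mono_a {a a' : ℕ} (h : a ≤ a') (p : ℕ) : NC A a p ≤ NC A a' p := by
  induction a', h using Nat.le_induction with
  | base => exact le_refl _
  | succ b hb ih => exact le_trans ih (NC_step_all hA b p).1

lemma NC_zero (p : ℕ) : NC A 0 p = 0 := by
  have : (NC A 0 p : ℤ) = 0 := by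
    rw [NC_cast hA]
    apply Finset.sum_eq_zero
    intro q _
    exact bA_top A (by omega) q
  exact_mod_cast this

lemma NC_top {a : ℕ} (ha : 2*n ≤ a) (p : ℕ) : NC A a p = n - p := by
  have hb : ∀ q : Fin n, bA A (2*n - a) q = 1 := by
    intro q
    have h0 : 2*n - a = 0 := by omega
    have h5 := hA.2.2.2.2 q
    have hex : (∃ k : Fin n, n - k.val = q.val + 1) := by
      refine ⟨⟨n - 1 - q.val, by omega⟩, ?_⟩
      have := q.isLt
      simp only []
      omega
    rw [if_pos hex] at h5
    rw [h0]
    unfold bA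
    have h6 : univ.filter (fun i : Fin (2*n) => 0 ≤ i.val) = univ := by
      apply Finset.filter_true_of_mem; intro i _; omega
    rw [h6]
    exact h5
  unfold NC
  have heq : (univ.filter (fun q : Fin n => p ≤ q.val ∧ bA A (2*n - a) q = 1))
      = univ.filter (fun q : Fin n => p ≤ q.val) := by
    apply filter_congr; intro q _; simp [hb q]
  rw [heq]
  exact card_filter_ge n p

omit hA in
lemma pairsum' {r s : ℕ} (hr : r < 2*n) (hs : s < 2*n)
    (hA : IsUASM n n (fun i => n - i.val) A)
    (hrs : ∃ k, k < n ∧ r = 2*k ∧ s = 2*k+1) :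
    (∑ q : Fin n, (A ⟨r, hr⟩ q + A ⟨s, hs⟩ q)) = 1 := by
  obtain ⟨k, hk, rfl, rfl⟩ := hrs
  exact hA.2.2.2.1 ⟨k, hk⟩

lemma NC_even {k : ℕ} (hk : k ≤ n) : NC A (2*k) 0 = k := by
  induction k with
  | zero => exact NC_zero hA 0
  | succ j ih =>
    have e1 := NC_step_a hA (show 2*j < 2*n by omega) 0
    have e2 := NC_step_a hA (show 2*j+1 < 2*n by omega) 0
    have hfilter : (univ.filter (fun q : Fin n => 0 ≤ q.val)) = univ := by
      apply Finset.filter_true_of_mem; intro q _; omega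
    have hp := pairsum' (A := A) (r := 2*n - (2*j+1) - 1) (s := 2*n - 2*j - 1)
      (by omega) (by omega) hA ⟨n - j - 1, by omega, by omega, by omega⟩
    rw [Finset.sum_add_distrib] at hp
    rw [hfilter] at e1 e2
    have ihv := ih (by omega)
    have hgoal : (NC A (2*(j+1)) 0 : ℤ) = (j : ℤ) + 1 := by
      have h2 : 2*(j+1) = (2*j+1)+1 := by ring
      rw [h2, e2, e1, ihv]
      push_cast
      linarith
    exact_mod_cast hgoal

end withA
end HK


namespace HK
open HKaux Finset

variable {n : ℕ}

noncomputable def R (T : Fin n → Fin n → Fin (2*n)) (a : ℕ) (i : Fin n) : ℕ :=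
  (univ.filter (fun j : Fin n => i.val ≤ j.val ∧ (T i j).val < a)).card

noncomputable def mT (T : Fin n → Fin n → Fin (2*n)) (a p : ℕ) : ℕ :=
  (univ.filter (fun i : Fin n => p+1 ≤ R T a i)).card

noncomputable def bT (T : Fin n → Fin n → Fin (2*n)) (j : ℕ) (q : Fin n) : ℤ :=
  if ∃ i : Fin n, R T (2*n - j) i = q.val+1 then 1 else 0

noncomputable def Phi (T : Fin n → Fin n → Fin (2*n)) : Fin (2*n) → Fin n → ℤ :=
  fun i q => bT T i.val q - bT T (i.val+1) q

lemma cellδ {i j : Fin n} (h : i.val ≤ j.val) : Cell n n (fun i : Fin n => n - i.val) i j :=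
  ⟨h, show j.val < n - i.val + i.val by have := j.isLt; have := i.isLt; omega⟩

lemma R_le (T : Fin n → Fin n → Fin (2*n)) (a : ℕ) (i : Fin n) : R T a i ≤ n - i.val := by
  unfold R
  calc (univ.filter (fun j : Fin n => i.val ≤ j.val ∧ (T i j).val < a)).card
      ≤ (univ.filter (fun j : Fin n => i.val ≤ j.val)).card := by
        apply card_le_card; intro x hx; simp only [mem_filter] at hx ⊢; exact ⟨hx.1, hx.2.1⟩
    _ = n - i.val := card_filter_ge n i.val

lemma R_mono_a (T : Fin n → Fin n → Fin (2*n)) {a a' : ℕ} (h : a ≤ a') (i : Fin n) :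
    R T a i ≤ R T a' i := by
  apply card_le_card
  intro x hx
  simp only [mem_filter] at hx ⊢
  exact ⟨hx.1, hx.2.1, by omega⟩

lemma R_zero (T : Fin n → Fin n → Fin (2*n)) (i : Fin n) : R T 0 i = 0 := by
  unfold R
  rw [Finset.card_eq_zero]
  apply Finset.filter_false_of_mem
  intro x _
  rintro ⟨-, h⟩
  omega

lemma bT_ge (T : Fin n → Fin n → Fin (2*n)) {j : ℕ} (hj : 2*n ≤ j) (q : Fin n) :
    bT T j q = 0 := by
  unfold bT
  rw [if_neg]
  rintro ⟨i, hi⟩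
  rw [show 2*n - j = 0 by omega, R_zero] at hi
  omega

lemma bT01 (T : Fin n → Fin n → Fin (2*n)) (j : ℕ) (q : Fin n) :
    bT T j q = 0 ∨ bT T j q = 1 := by
  unfold bT; split
  · right; rfl
  · left; rfl

section withT
variable {T : Fin n → Fin n → Fin (2*n)} (hT : IsSST n n (fun i => n - i.val) T)
include hT

lemma lt_iff_R {i j : Fin n} (hij : i.val ≤ j.val) (a : ℕ) :
    (T i j).val < a ↔ j.val - i.val + 1 ≤ R T a i := by
  constructor
  · intro h
    have hsub : univ.filter (fun x : Fin n => i.val ≤ x.val ∧ x.val < j.val + 1)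
        ⊆ univ.filter (fun x : Fin n => i.val ≤ x.val ∧ (T i x).val < a) := by
      intro x hx
      simp only [mem_filter, mem_univ, true_and] at hx ⊢
      refine ⟨hx.1, ?_⟩
      have hle : T i x ≤ T i j :=
        hT.2.2.1 i x j (cellδ hx.1) (cellδ hij) (by rw [Fin.le_def]; omega)
      rw [Fin.le_def] at hle
      omega
    have hcard := card_le_card hsub
    rw [card_filter_ge_lt n i.val (j.val+1) (by have := j.isLt; omega)] at hcard
    unfold R
    omega
  · intro h
    by_contra hlt
    push_neg at hlt
    have hsub : univ.filter (fun x : Fin n => i.val ≤ x.val ∧ (T i x).val < a)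
        ⊆ univ.filter (fun x : Fin n => i.val ≤ x.val ∧ x.val < j.val) := by
      intro x hx
      simp only [mem_filter, mem_univ, true_and] at hx ⊢
      refine ⟨hx.1, ?_⟩
      by_contra hge
      push_neg at hge
      have hle : T i j ≤ T i x :=
        hT.2.2.1 i j x (cellδ hij) (cellδ hx.1) (by rw [Fin.le_def]; omega)
      rw [Fin.le_def] at hle
      omega
    have hcard := card_le_card hsub
    rw [card_filter_ge_lt n i.val j.val (by have := j.isLt; omega)] at hcard
    unfold R at h
    omega

lemma diag_chain (p : ℕ) : ∀ (d : ℕ) (i i' j j' : Fin n), i.val ≤ j.val →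
    j.val = i.val + p → i'.val = i.val + d + 1 → j'.val = j.val + d + 1 →
    (T i j).val < (T i' j').val := by
  intro d
  induction d with
  | zero =>
    intro i i' j j' hij hp hi' hj'
    have h := hT.2.2.2.2 i i' j j' (cellδ hij) (cellδ (by omega)) (by omega) (by omega)
    rwa [Fin.lt_def] at h
  | succ d ih =>
    intro i i' j j' hij hp hi' hj'
    have hm1 : i.val + d + 1 < n := by have := i'.isLt; omega
    have hm2 : j.val + d + 1 < n := by have := j'.isLt; omega
    have h1 := ih i ⟨i.val + d + 1, hm1⟩ j ⟨j.val + d + 1, hm2⟩ hij hp rfl rfl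
    have h2 := hT.2.2.2.2 ⟨i.val + d + 1, hm1⟩ i' ⟨j.val + d + 1, hm2⟩ j'
      (cellδ (by simp; omega)) (cellδ (by omega)) (by simp; omega) (by simp; omega)
    rw [Fin.lt_def] at h2
    omega

lemma RDs {i i' : Fin n} (h : i.val < i'.val) (a : ℕ) (hpos : 1 ≤ R T a i') :
    R T a i' + 1 ≤ R T a i := by
  set s := R T a i' with hs
  have hle : s ≤ n - i'.val := R_le T a i'
  have hb : i'.val + s - 1 < n := by have := i'.isLt; omega
  set j' : Fin n := ⟨i'.val + s - 1, hb⟩ with hj'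
  have h1 : (T i' j').val < a := by
    rw [lt_iff_R hT (by simp [hj']; omega) a]
    simp [hj']
    omega
  have h2 : (T i j') ≤ (T i' j') :=
    hT.2.2.2.1 i i' j' (cellδ (by simp [hj']; omega)) (cellδ (by simp [hj']; omega))
      (by rw [Fin.le_def]; omega)
  rw [Fin.le_def] at h2
  have h3 : (T i j').val < a := by omega
  have h4 := (lt_iff_R hT (show i.val ≤ j'.val by simp [hj']; omega) a).mp h3
  simp [hj'] at h4
  omega

lemma RD {i i' : Fin n} (h : i.val ≤ i'.val) (a : ℕ) : R T a i' ≤ R T a i := by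
  rcases Nat.lt_or_ge (R T a i') 1 with h1 | h1
  · omega
  · rcases eq_or_lt_of_le h with h2 | h2
    · rw [show i = i' from Fin.ext h2]
    · have := RDs hT h2 a h1
      omega

lemma R_iff_mT {i : Fin n} (a p : ℕ) : p+1 ≤ R T a i ↔ i.val + 1 ≤ mT T a p := by
  constructor
  · intro h
    have hsub : univ.filter (fun x : Fin n => x.val < i.val + 1)
        ⊆ univ.filter (fun x : Fin n => p+1 ≤ R T a x) := by
      intro x hx
      simp only [mem_filter, mem_univ, true_and] at hx ⊢
      have := RD hT (show x.val ≤ i.val by omega) a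
      omega
    have hcard := card_le_card hsub
    rw [card_filter_lt n (i.val+1) (by have := i.isLt; omega)] at hcard
    unfold mT
    omega
  · intro h
    by_contra hlt
    push_neg at hlt
    have hsub : univ.filter (fun x : Fin n => p+1 ≤ R T a x)
        ⊆ univ.filter (fun x : Fin n => x.val < i.val) := by
      intro x hx
      simp only [mem_filter, mem_univ, true_and] at hx ⊢
      by_contra hge
      push_neg at hge
      have := RD hT (show i.val ≤ x.val by omega) a
      omega
    have hcard := card_le_card hsub
    rw [card_filter_lt n i.val (by have := i.isLt; omega)] at hcard
    unfold mT at h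
    omega

omit hT in
lemma mT_congr (T' : Fin n → Fin n → Fin (2*n)) {a a' : ℕ} (h : a = a') (p : ℕ) :
    mT T' a p = mT T' a' p := by rw [h]

omit hT in
lemma mT_zero (T' : Fin n → Fin n → Fin (2*n)) (p : ℕ) : mT T' 0 p = 0 := by
  unfold mT
  rw [Finset.card_eq_zero]
  apply Finset.filter_false_of_mem
  intro x _
  rw [R_zero]
  omega

omit hT in
lemma R_top (T' : Fin n → Fin n → Fin (2*n)) {a : ℕ} (ha : 2*n ≤ a) (i : Fin n) :
    R T' a i = n - i.val := by
  unfold R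
  have heq : univ.filter (fun j : Fin n => i.val ≤ j.val ∧ (T' i j).val < a)
      = univ.filter (fun j : Fin n => i.val ≤ j.val) := by
    apply filter_congr
    intro j _
    have := (T' i j).isLt
    constructor
    · exact fun hx => hx.1
    · exact fun hx => ⟨hx, by omega⟩
  rw [heq]
  exact card_filter_ge n i.val

omit hT in
lemma mT_top (T' : Fin n → Fin n → Fin (2*n)) {a : ℕ} (ha : 2*n ≤ a) (p : ℕ) :
    mT T' a p = n - p := by
  unfold mT
  have heq : univ.filter (fun i : Fin n => p+1 ≤ R T' a i)
      = univ.filter (fun i : Fin n => i.val < n - p) := by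
    apply filter_congr
    intro i _
    rw [R_top T' ha i]
    have := i.isLt
    omega
  rw [heq]
  exact card_filter_lt n (n-p) (by omega)

lemma mT_even {k : ℕ} (hk : k ≤ n) : mT T (2*k) 0 = k := by
  unfold mT
  have heq : univ.filter (fun i : Fin n => 0+1 ≤ R T (2*k) i)
      = univ.filter (fun i : Fin n => i.val < k) := by
    apply filter_congr
    intro i _
    have hd := hT.2.1 i i rfl (cellδ (le_refl _))
    have hiff := lt_iff_R hT (le_refl i.val) (2*k)
    simp only [Nat.sub_self] at hiff
    rw [← hiff]
    rcases hd with h | h <;> omega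
  rw [heq]
  exact card_filter_lt n k hk

lemma mT_step (a p : ℕ) : mT T a p ≤ mT T (a+1) p ∧ mT T (a+1) p ≤ mT T a p + 1 := by
  have hsub : univ.filter (fun i : Fin n => p+1 ≤ R T a i)
      ⊆ univ.filter (fun i : Fin n => p+1 ≤ R T (a+1) i) := by
    intro x hx
    simp only [mem_filter, mem_univ, true_and] at hx ⊢
    have := R_mono_a T (show a ≤ a+1 by omega) x
    omega
  unfold mT
  constructor
  · exact card_le_card hsub
  · have hdiff := Finset.card_sdiff_add_card_eq_card hsub
    have hone : (univ.filter (fun i : Fin n => p+1 ≤ R T (a+1) i)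
        \ univ.filter (fun i : Fin n => p+1 ≤ R T a i)).card ≤ 1 := by
      rw [Finset.card_le_one]
      intro x hx y hy
      simp only [Finset.mem_sdiff, mem_filter, mem_univ, true_and] at hx hy
      have hxb : x.val + p < n := by
        have := R_le T (a+1) x
        omega
      have hyb : y.val + p < n := by
        have := R_le T (a+1) y
        omega
      have hxv : (T x ⟨x.val + p, hxb⟩).val = a := by
        have h1 : (T x ⟨x.val + p, hxb⟩).val < a + 1 := by
          rw [lt_iff_R hT (by simp) (a+1)]
          simp
          omega
        have h2 : ¬ ((T x ⟨x.val + p, hxb⟩).val < a) := by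
          rw [lt_iff_R hT (by simp) a]
          simp
          omega
        omega
      have hyv : (T y ⟨y.val + p, hyb⟩).val = a := by
        have h1 : (T y ⟨y.val + p, hyb⟩).val < a + 1 := by
          rw [lt_iff_R hT (by simp) (a+1)]
          simp
          omega
        have h2 : ¬ ((T y ⟨y.val + p, hyb⟩).val < a) := by
          rw [lt_iff_R hT (by simp) a]
          simp
          omega
        omega
      rcases lt_trichotomy x.val y.val with hlt | heq | hgt
      · exfalso
        have := diag_chain hT p (y.val - x.val - 1) x y ⟨x.val+p, hxb⟩ ⟨y.val+p, hyb⟩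
          (by simp) (by simp) (by omega) (by simp; omega)
        omega
      · exact Fin.ext heq
      · exfalso
        have := diag_chain hT p (x.val - y.val - 1) y x ⟨y.val+p, hyb⟩ ⟨x.val+p, hxb⟩
          (by simp) (by simp) (by omega) (by simp; omega)
        omega
    omega

lemma bT_sum (a p : ℕ) (ha : a ≤ 2*n) :
    ∑ q ∈ univ.filter (fun q : Fin n => p ≤ q.val), bT T (2*n - a) q = (mT T a p : ℤ) := by
  have hsimp : 2*n - (2*n - a) = a := by omega
  have h1 : ∀ q ∈ univ.filter (fun q : Fin n => p ≤ q.val),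
      bT T (2*n - a) q = if ∃ i : Fin n, R T a i = q.val + 1 then (1:ℤ) else 0 := by
    intro q _
    unfold bT
    rw [hsimp]
  rw [Finset.sum_congr rfl h1, Finset.sum_boole, Finset.filter_filter]
  norm_cast
  unfold mT
  have hbound : ∀ x : Fin n, x ∈ univ.filter (fun i : Fin n => p+1 ≤ R T a i) →
      R T a x - 1 < n := by
    intro x hx
    have := R_le T a x
    have := x.isLt
    omega
  refine (Finset.card_bij (fun x hx => (⟨R T a x - 1, hbound x hx⟩ : Fin n)) ?_ ?_ ?_).symm
  · intro x hx
    simp only [mem_filter, mem_univ, true_and] at hx ⊢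
    exact ⟨by omega, ⟨x, by omega⟩⟩
  · intro x hx y hy heq
    simp only [mem_filter, mem_univ, true_and] at hx hy
    have heqv : R T a x = R T a y := by
      have := Fin.mk.injEq (R T a x - 1) (hbound x (by simp only [mem_filter, mem_univ, true_and]; exact hx)) (R T a y - 1) (hbound y (by simp only [mem_filter, mem_univ, true_and]; exact hy))
      rw [Fin.mk.injEq] at heq
      omega
    rcases lt_trichotomy x.val y.val with hlt | hc | hgt
    · exfalso; have := RDs hT hlt a (by omega); omega
    · exact Fin.ext hc
    · exfalso; have := RDs hT hgt a (by omega); omega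
  · intro q hq
    simp only [mem_filter, mem_univ, true_and] at hq
    obtain ⟨hpq, i, hi⟩ := hq
    refine ⟨i, by simp only [mem_filter, mem_univ, true_and]; omega, ?_⟩
    apply Fin.ext
    simp only []
    omega

end withT
end HK


namespace HK
open HKaux Finset

variable {n : ℕ}

lemma bT_cast (T : Fin n → Fin n → Fin (2*n)) {x y : ℕ} (h : x = y) (q : Fin n) :
    bT T x q = bT T y q := by rw [h]

lemma bA_Phi (T : Fin n → Fin n → Fin (2*n)) {j : ℕ} (hj : j ≤ 2*n) (q : Fin n) :
    bA (Phi T) j q = bT T j q := by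
  calc bA (Phi T) j q
      = ∑ x ∈ (range (2*n)).filter (fun x => j ≤ x), (bT T x q - bT T (x+1) q) :=
        sum_filter_val (2*n) (fun x => j ≤ x) (fun x => bT T x q - bT T (x+1) q)
    _ = ∑ x ∈ Ico j (2*n), (bT T x q - bT T (x+1) q) := by
        rw [show (range (2*n)).filter (fun x => j ≤ x) = Ico j (2*n) from by
          ext x; simp [Finset.mem_Ico]; omega]
    _ = bT T j q - bT T (2*n) q := telescope_Ico _ hj
    _ = bT T j q := by rw [bT_ge T (le_refl _) q]; ring

section fwd
variable {T : Fin n → Fin n → Fin (2*n)} (hT : IsSST n n (fun i => n - i.val) T)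
include hT

lemma bT_sum0 (a : ℕ) (ha : a ≤ 2*n) :
    ∑ q : Fin n, bT T (2*n - a) q = (mT T a 0 : ℤ) := by
  have h := bT_sum hT a 0 ha
  rwa [show univ.filter (fun q : Fin n => 0 ≤ q.val) = univ from
    Finset.filter_true_of_mem (by intros; omega)] at h

theorem isUASM_Phi : IsUASM n n (fun i => n - i.val) (Phi T) := by
  refine ⟨?_, ?_, ?_, ?_, ?_⟩
  · intro i q
    unfold Phi
    rcases bT01 T i.val q with h1 | h1 <;> rcases bT01 T (i.val+1) q with h2 | h2 <;>
      rw [h1, h2] <;> norm_num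
  · intro i pf
    have hfc : univ.filter (fun q : Fin n => pf ≤ q)
        = univ.filter (fun q : Fin n => pf.val ≤ q.val) := by
      apply filter_congr; intro q _; exact Fin.le_def
    rw [hfc]
    have hsplit : ∑ q ∈ univ.filter (fun q : Fin n => pf.val ≤ q.val), Phi T i q
        = (∑ q ∈ univ.filter (fun q : Fin n => pf.val ≤ q.val), bT T i.val q)
          - (∑ q ∈ univ.filter (fun q : Fin n => pf.val ≤ q.val), bT T (i.val+1) q) :=
      Finset.sum_sub_distrib (fun q => bT T i.val q) (fun q => bT T (i.val+1) q)
    have e1 : ∑ q ∈ univ.filter (fun q : Fin n => pf.val ≤ q.val), bT T i.val q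
        = (mT T (2*n - i.val) pf.val : ℤ) := by
      have h := bT_sum hT (2*n - i.val) pf.val (by omega)
      rw [show 2*n - (2*n - i.val) = i.val from by have := i.isLt; omega] at h
      exact h
    have e2 : ∑ q ∈ univ.filter (fun q : Fin n => pf.val ≤ q.val), bT T (i.val+1) q
        = (mT T (2*n - (i.val+1)) pf.val : ℤ) := by
      have h := bT_sum hT (2*n - (i.val+1)) pf.val (by omega)
      rw [show 2*n - (2*n - (i.val+1)) = i.val+1 from by have := i.isLt; omega] at h
      exact h
    have hc : mT T (2*n - i.val) pf.val = mT T ((2*n - (i.val+1))+1) pf.val :=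
      mT_congr T (by have := i.isLt; omega) pf.val
    have hs := mT_step hT (2*n - (i.val+1)) pf.val
    rw [hsplit, e1, e2, hc]
    omega
  · intro j q
    have hfc : univ.filter (fun i : Fin (2*n) => j ≤ i)
        = univ.filter (fun i : Fin (2*n) => j.val ≤ i.val) := by
      apply filter_congr; intro i _; exact Fin.le_def
    rw [hfc]
    have hb : (∑ i ∈ univ.filter (fun i : Fin (2*n) => j.val ≤ i.val), Phi T i q)
        = bT T j.val q := bA_Phi T (by omega) q
    rw [hb]
    exact bT01 T j.val q
  · intro k
    have h1 : ∀ q : Fin n, Phi T ⟨2*k.val, by have := k.isLt; omega⟩ q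
        + Phi T ⟨2*k.val+1, by have := k.isLt; omega⟩ q
        = bT T (2*k.val) q - bT T (2*k.val+1+1) q := by
      intro q
      show (bT T (2*k.val) q - bT T (2*k.val+1) q)
        + (bT T (2*k.val+1) q - bT T (2*k.val+1+1) q)
        = bT T (2*k.val) q - bT T (2*k.val+1+1) q
      ring
    rw [Finset.sum_congr rfl (fun q _ => h1 q), Finset.sum_sub_distrib]
    have hk := k.isLt
    have e1 : ∑ q : Fin n, bT T (2*k.val) q = (mT T (2*n - 2*k.val) 0 : ℤ) := by
      have h := bT_sum0 hT (2*n - 2*k.val) (by omega)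
      rw [show 2*n - (2*n - 2*k.val) = 2*k.val from by omega] at h
      exact h
    have e2 : ∑ q : Fin n, bT T (2*k.val+1+1) q = (mT T (2*n - (2*k.val+1+1)) 0 : ℤ) := by
      have h := bT_sum0 hT (2*n - (2*k.val+1+1)) (by omega)
      rw [show 2*n - (2*n - (2*k.val+1+1)) = 2*k.val+1+1 from by omega] at h
      exact h
    have v1 : mT T (2*n - 2*k.val) 0 = n - k.val := by
      rw [mT_congr T (show 2*n - 2*k.val = 2*(n - k.val) from by omega) 0]
      exact mT_even hT (by omega)
    have v2 : mT T (2*n - (2*k.val+1+1)) 0 = n - k.val - 1 := by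
      rw [mT_congr T (show 2*n - (2*k.val+1+1) = 2*(n - k.val - 1) from by omega) 0]
      exact mT_even hT (by omega)
    rw [e1, e2, v1, v2]
    omega
  · intro q
    have hq := q.isLt
    have hfc : univ.filter (fun i : Fin (2*n) => 0 ≤ i.val) = univ :=
      Finset.filter_true_of_mem (by intros; omega)
    have hb : (∑ i, Phi T i q) = bT T 0 q := by
      rw [← hfc]
      exact bA_Phi T (by omega) q
    rw [hb]
    have hl : bT T 0 q = 1 := by
      unfold bT
      rw [if_pos]
      refine ⟨⟨n - 1 - q.val, by omega⟩, ?_⟩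
      rw [R_top T (by omega) _]
      show n - (n - 1 - q.val) = q.val + 1
      omega
    rw [hl, if_pos]
    refine ⟨⟨n - 1 - q.val, by omega⟩, ?_⟩
    show n - (n - 1 - q.val) = q.val + 1
    omega

end fwd
end HK


namespace HK
open HKaux Finset

variable {n : ℕ}

noncomputable def psiVal (A : Fin (2*n) → Fin n → ℤ) (i j : Fin n) : ℕ :=
  if i.val ≤ j.val then
    ((range (2*n)).filter (fun a => NC A (a+1) (j.val - i.val) ≤ i.val)).card
  else 0

noncomputable def Psi (A : Fin (2*n) → Fin n → ℤ) : Fin n → Fin n → Fin (2*n) :=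
  fun i j => ⟨psiVal A i j % (2*n), Nat.mod_lt _ (by have := i.isLt; omega)⟩

section bwd
variable {A : Fin (2*n) → Fin n → ℤ} (hA : IsUASM n n (fun i => n - i.val) A)
include hA

lemma psiVal_lt (i j : Fin n) : psiVal A i j < 2*n := by
  have hn := i.isLt
  unfold psiVal
  split
  case isTrue hij =>
    set S := (range (2*n)).filter (fun a => NC A (a+1) (j.val - i.val) ≤ i.val) with hS
    have hsub : S ⊆ range (2*n) := filter_subset _ _
    by_contra hge
    push_neg at hge
    have hcard : (range (2*n)).card ≤ S.card := by simpa using hge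
    have heq : S = range (2*n) := Finset.eq_of_subset_of_card_le hsub hcard
    have hmem : 2*n - 1 ∈ S := by rw [heq]; simp; omega
    rw [hS, mem_filter] at hmem
    have h2 : NC A (2*n - 1 + 1) (j.val - i.val) = n - (j.val - i.val) :=
      NC_top hA (by omega) _
    have hj := j.isLt
    omega
  case isFalse => omega

lemma psi_val_eq (i j : Fin n) : (Psi A i j).val = psiVal A i j :=
  Nat.mod_eq_of_lt (psiVal_lt hA i j)

lemma psi_le_iff {i j : Fin n} (hij : i.val ≤ j.val) (v : ℕ) :
    (Psi A i j).val ≤ v ↔ i.val + 1 ≤ NC A (v+1) (j.val - i.val) := by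
  rw [psi_val_eq hA]
  unfold psiVal
  rw [if_pos hij]
  set S := (range (2*n)).filter (fun a => NC A (a+1) (j.val - i.val) ≤ i.val) with hS
  have hdown : ∀ a ∈ S, ∀ b ≤ a, b ∈ S := by
    intro a ha b hb
    rw [hS, mem_filter] at ha ⊢
    refine ⟨by simp; have := mem_range.mp ha.1; omega, ?_⟩
    have := NC_mono_a hA (show b+1 ≤ a+1 by omega) (j.val - i.val)
    omega
  have hmem := downset_mem_iff (filter_subset _ _) hdown
  have hcard_eq : S.card
      = ((range (2*n)).filter (fun a => NC A (a+1) (j.val - i.val) ≤ i.val)).card := by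
    rw [hS]
  have hj := j.isLt
  have hi := i.isLt
  constructor
  · intro h
    by_contra hnc
    push_neg at hnc
    have hnc' : NC A (v+1) (j.val - i.val) ≤ i.val := by omega
    have hv2n : v < 2*n := by
      by_contra hge
      push_neg at hge
      have := NC_top hA (show 2*n ≤ v+1 by omega) (j.val - i.val)
      omega
    have : v ∈ S := by rw [hS, mem_filter]; exact ⟨mem_range.mpr hv2n, hnc'⟩
    rw [hmem v] at this
    omega
  · intro h
    by_contra hc
    push_neg at hc
    have : v ∈ S := (hmem v).mpr hc
    rw [hS, mem_filter] at this
    omega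

lemma isSST_Psi : IsSST n n (fun i => n - i.val) (Psi A) := by
  have cell_le : ∀ (i j : Fin n), Cell n n (fun i : Fin n => n - i.val) i j → i.val ≤ j.val :=
    fun i j hc => hc.1
  refine ⟨?_, ?_, ?_, ?_, ?_⟩
  · intro i j hnc
    rw [psi_val_eq hA]
    unfold psiVal
    rw [if_neg]
    intro hij
    exact hnc (cellδ hij)
  · intro i j hij _
    have hi := i.isLt
    have hup : (Psi A i j).val ≤ 2*i.val + 1 := by
      rw [psi_le_iff hA (by omega) (2*i.val+1),
        show j.val - i.val = 0 from by omega,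
        show 2*i.val+1+1 = 2*(i.val+1) from by ring,
        NC_even hA (show i.val+1 ≤ n by omega)]
    have hlow : 2*i.val ≤ (Psi A i j).val := by
      rcases Nat.eq_zero_or_pos i.val with h0 | hpos
      · omega
      · by_contra hlt
        push_neg at hlt
        have h1 : (Psi A i j).val ≤ 2*i.val - 1 := by omega
        rw [psi_le_iff hA (by omega) (2*i.val-1),
          show j.val - i.val = 0 from by omega,
          show 2*i.val-1+1 = 2*i.val from by omega,
          NC_even hA (show i.val ≤ n by omega)] at h1
        omega
    omega
  · intro i j j' hc hc' hjj'
    rw [Fin.le_def] at hjj' ⊢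
    rw [Fin.le_def.symm] at hjj'
    have h1 := (psi_le_iff hA (cell_le i j' hc') ((Psi A i j').val)).mp (le_refl _)
    have h2 : NC A ((Psi A i j').val + 1) (j'.val - i.val)
        ≤ NC A ((Psi A i j').val + 1) (j.val - i.val) := by
      apply NC_mono_p hA
      have := Fin.le_def.mp hjj'
      omega
    exact (psi_le_iff hA (cell_le i j hc) _).mpr (by omega)
  · intro i i' j hc hc' hii'
    rw [Fin.le_def]
    rw [Fin.le_def] at hii'
    have h1 := (psi_le_iff hA (cell_le i' j hc') ((Psi A i' j).val)).mp (le_refl _)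
    have h2 := NC_lower_p hA ((Psi A i' j).val + 1) (j.val - i'.val) (i'.val - i.val)
    rw [show j.val - i'.val + (i'.val - i.val) = j.val - i.val from by
      have := cell_le i' j hc'; omega] at h2
    exact (psi_le_iff hA (cell_le i j hc) _).mpr (by omega)
  · intro i i' j j' hc hc' hi' hj'
    rw [Fin.lt_def]
    have hij := cell_le i j hc
    have hij' := cell_le i' j' hc'
    have h1 := (psi_le_iff hA hij' ((Psi A i' j').val)).mp (le_refl _)
    set v' := (Psi A i' j').val with hv'
    have hpp : j'.val - i'.val = j.val - i.val := by omega
    rw [hpp] at h1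
    rcases Nat.eq_zero_or_pos v' with h0 | hpos
    · exfalso
      rw [h0] at h1
      have ha := NC_mono_p hA (show (0:ℕ) ≤ j.val - i.val by omega) (a := 0+1)
      have hb := (NC_step_all hA 0 0).2
      have hz := NC_zero hA 0
      omega
    · have hstep := (NC_step_all hA (v'-1+1) (j.val - i.val)).2
      rw [show v'-1+1 = v' from by omega] at hstep
      have h3 : i.val + 1 ≤ NC A ((v'-1)+1) (j.val - i.val) := by
        rw [show v'-1+1 = v' from by omega]
        omega
      have h4 := (psi_le_iff hA hij (v'-1)).mpr h3
      omega

end bwd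
end HK


namespace HK
open HKaux Finset

variable {n : ℕ}

section rt
variable {A : Fin (2*n) → Fin n → ℤ} (hA : IsUASM n n (fun i => n - i.val) A)
include hA

lemma mT_Psi_eq_NC (a p : ℕ) : mT (Psi A) a p = NC A a p := by
  have hS := isSST_Psi hA
  have hle := NC_le hA a p
  unfold mT
  have heq : univ.filter (fun i : Fin n => p+1 ≤ R (Psi A) a i)
      = univ.filter (fun i : Fin n => i.val < NC A a p) := by
    apply filter_congr
    intro i _
    have hi := i.isLt
    constructor
    · intro h
      rcases Nat.eq_zero_or_pos a with rfl | ha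
      · rw [R_zero] at h; omega
      · have hb : i.val + p < n := by have := R_le (Psi A) a i; omega
        have h3 := lt_iff_R hS (show i.val ≤ (⟨i.val+p, hb⟩ : Fin n).val by simp) a
        have hval : (Psi A i ⟨i.val+p, hb⟩).val < a := by
          apply h3.mpr
          show i.val + p - i.val + 1 ≤ R (Psi A) a i
          omega
        have h4 := (psi_le_iff hA (show i.val ≤ (⟨i.val+p, hb⟩ : Fin n).val by simp)
          (a-1)).mp (by omega)
        rw [show a-1+1 = a from by omega,
          show (⟨i.val+p, hb⟩ : Fin n).val - i.val = p from by simp] at h4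
        omega
    · intro h
      rcases Nat.eq_zero_or_pos a with rfl | ha
      · rw [NC_zero hA] at h; omega
      · have hb : i.val + p < n := by omega
        have h4 : (Psi A i ⟨i.val+p, hb⟩).val ≤ a-1 := by
          apply (psi_le_iff hA (show i.val ≤ (⟨i.val+p, hb⟩ : Fin n).val by simp) (a-1)).mpr
          rw [show a-1+1 = a from by omega,
            show (⟨i.val+p, hb⟩ : Fin n).val - i.val = p from by simp]
          omega
        have h3 := lt_iff_R hS (show i.val ≤ (⟨i.val+p, hb⟩ : Fin n).val by simp) a
        have h5 := h3.mp (by omega)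
        have h6 : i.val + p - i.val + 1 ≤ R (Psi A) a i := h5
        omega
  rw [heq]
  exact card_filter_lt n (NC A a p) (by omega)

lemma bT_Psi {j : ℕ} (hj : j ≤ 2*n) (q : Fin n) : bT (Psi A) j q = bA A j q := by
  have hS := isSST_Psi hA
  have hsum : ∀ p : ℕ,
      ∑ q' ∈ univ.filter (fun q' : Fin n => p ≤ q'.val), bT (Psi A) j q'
      = ∑ q' ∈ univ.filter (fun q' : Fin n => p ≤ q'.val), bA A j q' := by
    intro p
    have h1 : ∑ q' ∈ univ.filter (fun q' : Fin n => p ≤ q'.val), bT (Psi A) j q'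
        = (mT (Psi A) (2*n - j) p : ℤ) := by
      have h := bT_sum hS (2*n - j) p (by omega)
      rwa [show 2*n - (2*n - j) = j from by omega] at h
    have h2 : (NC A (2*n - j) p : ℤ)
        = ∑ q' ∈ univ.filter (fun q' : Fin n => p ≤ q'.val), bA A j q' := by
      have h := NC_cast hA (2*n - j) p
      rwa [show 2*n - (2*n - j) = j from by omega] at h
    rw [h1, ← h2, mT_Psi_eq_NC hA]
  have e1 := filter_val_split (N := n) q.isLt (fun x => bT (Psi A) j x)
  have e2 := filter_val_split (N := n) q.isLt (fun x => bA A j x)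
  have hq : (⟨q.val, q.isLt⟩ : Fin n) = q := Fin.ext rfl
  rw [hq] at e1 e2
  have hs1 := hsum q.val
  have hs2 := hsum (q.val + 1)
  omega

lemma Phi_Psi : Phi (Psi A) = A := by
  funext i q
  have h1 : Phi (Psi A) i q = bT (Psi A) i.val q - bT (Psi A) (i.val+1) q := rfl
  have hi := i.isLt
  rw [h1, bT_Psi hA (by omega) q, bT_Psi hA (by omega) q, ← A_eq_bA_sub]

end rt

section rt2
variable {T : Fin n → Fin n → Fin (2*n)} (hT : IsSST n n (fun i => n - i.val) T)
include hT

lemma Psi_Phi : Psi (Phi T) = T := by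
  have hU := isUASM_Phi hT
  funext i j
  apply Fin.ext
  rcases le_or_gt i.val j.val with hij | hij
  · have key3 : ∀ (v : ℕ), ((Psi (Phi T) i j).val ≤ v ↔ (T i j).val ≤ v) ∨ 2*n ≤ v := by
      intro v
      rcases le_or_gt (2*n) v with hv | hv
      · right; exact hv
      left
      rw [psi_le_iff hU hij v]
      have hNC : NC (Phi T) (v+1) (j.val - i.val) = mT T (v+1) (j.val - i.val) := by
        have hc := NC_cast hU (v+1) (j.val - i.val)
        have hb : ∀ q' ∈ univ.filter (fun q' : Fin n => (j.val - i.val) ≤ q'.val),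
            bA (Phi T) (2*n - (v+1)) q' = bT T (2*n - (v+1)) q' :=
          fun q' _ => bA_Phi T (by omega) q'
        rw [Finset.sum_congr rfl hb, bT_sum hT (v+1) _ (by omega)] at hc
        exact_mod_cast hc
      rw [hNC, ← R_iff_mT hT (v+1) (j.val - i.val), ← lt_iff_R hT hij (v+1)]
      omega
    have hvT := (T i j).isLt
    have hvP := (Psi (Phi T) i j).isLt
    have h1 : (Psi (Phi T) i j).val ≤ (T i j).val := by
      rcases key3 (T i j).val with h | h
      · exact h.mpr (le_refl _)
      · omega
    have h2 : (T i j).val ≤ (Psi (Phi T) i j).val := by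
      rcases key3 (Psi (Phi T) i j).val with h | h
      · exact h.mp (le_refl _)
      · omega
    omega
  · rw [psi_val_eq hU]
    unfold psiVal
    rw [if_neg (by omega)]
    exact (hT.1 i j (fun hc => absurd hc.1 (by omega))).symm

end rt2
end HK

/-- The number of `sp(2n)`-standard shifted tableaux of staircase shape
`δ = (n, n−1, …, 1)` equals the number of `2n × n` U-turn alternating sign
matrices. -/
theorem card_sst_eq_card_uasm (n : ℕ) :
    Nat.card {T : Fin n → Fin n → Fin (2*n) // IsSST n n (fun i => n - i.val) T}
      = Nat.card {A : Fin (2*n) → Fin n → ℤ // IsUASM n n (fun i => n - i.val) A} := by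
  apply Nat.card_congr
  exact
    { toFun := fun t => ⟨HK.Phi t.1, HK.isUASM_Phi t.2⟩
      invFun := fun s => ⟨HK.Psi s.1, HK.isSST_Psi s.2⟩
      left_inv := fun t => Subtype.ext (HK.Psi_Phi t.2)
      right_inv := fun s => Subtype.ext (HK.Phi_Psi s.2) }
end

section
/- Under the bijection Ψ between sp(2n)-standard shifted tableaux of shape μ and 2n×m μ-UASMs, for each k the number of entries equal to k in ST equals the number of positive zeros and ones in row 2n+1−2k of Ψ(ST), and the number of entries equal to k̄ equals the number of positive zeros and ones in row 2n+2−2k; hence the x-weights agree: x^{wgt(ST)} = x^{wgt(Ψ(ST))}. -/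
open scoped Classical

/-- Entry `(i,q)` of `A` is "positive": it is a `1`, or a zero whose nearest
nonzero neighbour to the right in its row is a `1`. -/
def PosEntry (n m : ℕ) (A : Fin (2*n) → Fin m → ℤ) (i : Fin (2*n)) (q : Fin m) : Prop :=
  A i q = 1 ∨ (A i q = 0 ∧ ∃ r, q < r ∧ A i r = 1 ∧ ∀ p, q < p → p < r → A i p = 0)

/-- `neg(UA)`: the number of `−1` entries of `A`. -/
noncomputable def negCount (n m : ℕ) (A : Fin (2*n) → Fin m → ℤ) : ℕ :=
  (Finset.univ.filter (fun p : Fin (2*n) × Fin m => A p.1 p.2 = -1)).card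

/-- `bar(UA)`: the number of positive zeros and ones in the even-numbered rows
(counted from the top, so rows with odd 0-based index). -/
noncomputable def barUA (n m : ℕ) (A : Fin (2*n) → Fin m → ℤ) : ℕ :=
  (Finset.univ.filter (fun p : Fin (2*n) × Fin m =>
      p.1.val % 2 = 1 ∧ PosEntry n m A p.1 p.2)).card

/-- `(i,q)` is a site of special interest: a `0` whose nearest nonzero right
neighbour is `1`, and whose nearest nonzero neighbour below is `1` (odd rows,
i.e. even 0-based index) resp. `−1` or nonexistent (even rows). -/
def IsSSI (n m : ℕ) (A : Fin (2*n) → Fin m → ℤ) (i : Fin (2*n)) (q : Fin m) : Prop :=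
  A i q = 0 ∧ (∃ r, q < r ∧ A i r = 1 ∧ ∀ p, q < p → p < r → A i p = 0) ∧
  (if i.val % 2 = 0 then
      ∃ j, i < j ∧ A j q = 1 ∧ ∀ l, i < l → l < j → A l q = 0
    else
      ((∃ j, i < j ∧ A j q = -1 ∧ ∀ l, i < l → l < j → A l q = 0) ∨
        ∀ j, i < j → A j q = 0))

/-- `ssi(UA)`: the number of sites of special interest of `A`. -/
noncomputable def ssiCount (n m : ℕ) (A : Fin (2*n) → Fin m → ℤ) : ℕ :=
  (Finset.univ.filter (fun p : Fin (2*n) × Fin m => IsSSI n m A p.1 p.2)).card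

/-- The number of boxes of the tableau `T` containing the letter `e`. -/
noncomputable def mCount (n m : ℕ) (μ : Fin n → ℕ)
    (T : Fin n → Fin m → Fin (2*n)) (e : Fin (2*n)) : ℕ :=
  (Finset.univ.filter
    (fun p : Fin n × Fin m => Cell n m μ p.1 p.2 ∧ T p.1 p.2 = e)).card

/-- The number of positive entries (ones and positive zeros) in row `r`. -/
noncomputable def posCount (n m : ℕ) (A : Fin (2*n) → Fin m → ℤ)
    (r : Fin (2*n)) : ℕ :=
  (Finset.univ.filter (fun q : Fin m => PosEntry n m A r q)).card

/-- The bijection `Ψ` from `sp(2n)`-standard shifted tableaux of shape `μ` to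
`μ`-UASMs: row `r` of `Ψ(T)` records the diagonals met by the ribbon strip of
the letter `2n−1−r` (rows are labelled `n, n̄, …, 1, 1̄` from top to bottom);
a `1` is placed where a connected run of met diagonals ends, a `−1` where a
run of unmet diagonals ends immediately before a met one, and `0` elsewhere. -/
noncomputable def Psi (n m : ℕ) (μ : Fin n → ℕ)
    (T : Fin n → Fin m → Fin (2*n)) : Fin (2*n) → Fin m → ℤ := fun r q =>
  let P : Fin m → Prop := fun c => ∃ (i : Fin n) (j : Fin m),
      Cell n m μ i j ∧ (T i j).val = 2*n - 1 - r.val ∧ j.val = i.val + c.val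
  if h : q.val + 1 < m then
    if P q then (if P ⟨q.val+1, h⟩ then 0 else 1)
    else (if P ⟨q.val+1, h⟩ then -1 else 0)
  else (if P q then 1 else 0)

section Aux

variable {n m : ℕ} {μ : Fin n → ℕ} {T : Fin n → Fin m → Fin (2*n)}

/-- Diagonal `c` is met by the ribbon strip of the letter with code `e`. -/
def Dg (n m : ℕ) (μ : Fin n → ℕ) (T : Fin n → Fin m → Fin (2*n)) (e c : ℕ) : Prop :=
  ∃ (i : Fin n) (j : Fin m), Cell n m μ i j ∧ (T i j).val = e ∧ j.val = i.val + c

lemma psi_eq_one (r : Fin (2*n)) (q : Fin m)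
    (hD : Dg n m μ T (2*n-1-r.val) q.val)
    (hnext : ∀ _ : q.val + 1 < m, ¬ Dg n m μ T (2*n-1-r.val) (q.val+1)) :
    Psi n m μ T r q = 1 := by
  unfold Psi
  unfold Dg at hD hnext
  simp only []
  by_cases h1 : q.val + 1 < m
  · rw [dif_pos h1, if_pos hD, if_neg (hnext h1)]
  · rw [dif_neg h1, if_pos hD]

lemma psi_eq_zero_run (r : Fin (2*n)) (q : Fin m) (h1 : q.val + 1 < m)
    (hD : Dg n m μ T (2*n-1-r.val) q.val)
    (hD' : Dg n m μ T (2*n-1-r.val) (q.val+1)) :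
    Psi n m μ T r q = 0 := by
  unfold Psi
  unfold Dg at hD hD'
  simp only []
  rw [dif_pos h1, if_pos hD, if_pos hD']

lemma psi_ne_one (r : Fin (2*n)) (q : Fin m)
    (hD : ¬ Dg n m μ T (2*n-1-r.val) q.val) :
    Psi n m μ T r q ≠ 1 := by
  unfold Psi
  unfold Dg at hD
  simp only []
  by_cases h1 : q.val + 1 < m
  · rw [dif_pos h1, if_neg hD]; split_ifs <;> norm_num
  · rw [dif_neg h1, if_neg hD]; norm_num

lemma psi_step (r : Fin (2*n)) (q : Fin m)
    (hD : ¬ Dg n m μ T (2*n-1-r.val) q.val)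
    (h0 : Psi n m μ T r q = 0) (h1 : q.val + 1 < m) :
    ¬ Dg n m μ T (2*n-1-r.val) (q.val+1) := by
  intro hD'
  unfold Psi at h0
  unfold Dg at hD hD'
  simp only [] at h0
  rw [dif_pos h1, if_neg hD, if_pos hD'] at h0
  norm_num at h0

/-- Entries strictly increase along diagonals of the shifted diagram. -/
lemma diag_strict (hμ : StrictAnti μ) (hT : IsSST n m μ T) (d : ℕ) :
    ∀ (i : Fin n) (j : Fin m) (i' : Fin n) (j' : Fin m),
      i'.val = i.val + d + 1 → j'.val = j.val + d + 1 →
      Cell n m μ i j → Cell n m μ i' j' → T i j < T i' j' := by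
  induction d with
  | zero =>
    intro i j i' j' hi hj hc hc'
    exact hT.2.2.2.2 i i' j j' hc hc' hi hj
  | succ d IH =>
    intro i j i' j' hi hj hc hc'
    have hin : i.val + d + 1 < n := by have := i'.isLt; omega
    have hjm : j.val + d + 1 < m := by have := j'.isLt; omega
    set i'' : Fin n := ⟨i.val + d + 1, hin⟩ with hi''
    set j'' : Fin m := ⟨j.val + d + 1, hjm⟩ with hj''
    have hμlt : μ i' < μ i'' := hμ (by rw [Fin.lt_def]; show i.val + d + 1 < i'.val; omega)
    obtain ⟨hc1, hc2⟩ := hc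
    obtain ⟨hc1', hc2'⟩ := hc'
    have hcell'' : Cell n m μ i'' j'' := by
      refine ⟨?_, ?_⟩
      · show i.val + d + 1 ≤ j.val + d + 1; omega
      · show j.val + d + 1 < μ i'' + (i.val + d + 1); omega
    have h1 := IH i j i'' j'' rfl rfl ⟨hc1, hc2⟩ hcell''
    have h2 := hT.2.2.2.2 i'' i' j'' j' hcell'' ⟨hc1', hc2'⟩
      (by show i'.val = i.val + d + 1 + 1; omega)
      (by show j'.val = j.val + d + 1 + 1; omega)
    exact lt_trans h1 h2

/-- Each diagonal holds at most one box with a given letter, so the number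
of boxes with letter `e` is the number of diagonals met. -/
lemma mcount_eq (hμ : StrictAnti μ) (hT : IsSST n m μ T) (e : Fin (2*n)) :
    mCount n m μ T e
      = (Finset.univ.filter (fun q : Fin m => Dg n m μ T e.val q.val)).card := by
  unfold mCount
  apply Finset.card_bij
    (fun p _ => (⟨p.2.val - p.1.val, lt_of_le_of_lt (Nat.sub_le _ _) p.2.isLt⟩ : Fin m))
  · intro p hp
    simp only [Finset.mem_filter, Finset.mem_univ, true_and] at hp ⊢
    exact ⟨p.1, p.2, hp.1, congrArg Fin.val hp.2, by have := hp.1.1; omega⟩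
  · intro p hp p' hp' hpp
    simp only [Finset.mem_filter, Finset.mem_univ, true_and] at hp hp'
    have h1 : p.1.val ≤ p.2.val := hp.1.1
    have h1' : p'.1.val ≤ p'.2.val := hp'.1.1
    have hv : p.2.val - p.1.val = p'.2.val - p'.1.val := congrArg Fin.val hpp
    have he : (T p.1 p.2).val = (T p'.1 p'.2).val := by
      rw [hp.2, hp'.2]
    rcases lt_trichotomy p.1.val p'.1.val with h | h | h
    · exfalso
      have := diag_strict hμ hT (p'.1.val - p.1.val - 1) p.1 p.2 p'.1 p'.2
        (by omega) (by omega) hp.1 hp'.1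
      rw [Fin.lt_def] at this
      omega
    · have h2 : p.2.val = p'.2.val := by omega
      exact Prod.ext (Fin.ext h) (Fin.ext h2)
    · exfalso
      have := diag_strict hμ hT (p.1.val - p'.1.val - 1) p'.1 p'.2 p.1 p.2
        (by omega) (by omega) hp'.1 hp.1
      rw [Fin.lt_def] at this
      omega
  · intro q hq
    simp only [Finset.mem_filter, Finset.mem_univ, true_and] at hq
    obtain ⟨i, j, hc, he, hj⟩ := hq
    refine ⟨(i, j), ?_, ?_⟩
    · simp only [Finset.mem_filter, Finset.mem_univ, true_and]
      exact ⟨hc, Fin.ext he⟩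
    · apply Fin.ext
      show j.val - i.val = q.val
      omega

/-- If diagonal `q` is met, the run of met diagonals from `q` ends with a `1`,
with only `0`s before it. -/
lemma dg_imp_run (r : Fin (2*n)) :
    ∀ (t : ℕ) (q : Fin m), m - q.val ≤ t → Dg n m μ T (2*n-1-r.val) q.val →
      ∃ s : Fin m, q ≤ s ∧ Psi n m μ T r s = 1 ∧
        ∀ p : Fin m, q ≤ p → p < s → Psi n m μ T r p = 0 := by
  intro t
  induction t with
  | zero =>
    intro q hq _
    exact absurd hq (by have := q.isLt; omega)
  | succ t IH =>
    intro q hq hD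
    by_cases h1 : q.val + 1 < m
    · by_cases h2 : Dg n m μ T (2*n-1-r.val) (q.val+1)
      · have hq0 : Psi n m μ T r q = 0 := psi_eq_zero_run r q h1 hD h2
        obtain ⟨s, hs1, hs2, hs3⟩ := IH ⟨q.val+1, h1⟩ (by simp only; omega) h2
        rw [Fin.le_def] at hs1
        refine ⟨s, by rw [Fin.le_def]; simp only at hs1; omega, hs2, ?_⟩
        intro p hp1 hp2
        by_cases hpq : p.val = q.val
        · have : p = q := Fin.ext hpq
          rw [this]; exact hq0
        · rw [Fin.le_def] at hp1
          exact hs3 p (by rw [Fin.le_def]; simp only; omega) hp2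
      · refine ⟨q, le_refl q, psi_eq_one r q hD (fun _ => h2), ?_⟩
        intro p hp1 hp2
        rw [Fin.le_def] at hp1; rw [Fin.lt_def] at hp2
        omega
    · refine ⟨q, le_refl q, psi_eq_one r q hD (fun h => absurd h h1), ?_⟩
      intro p hp1 hp2
      rw [Fin.le_def] at hp1; rw [Fin.lt_def] at hp2
      omega

/-- If diagonal `q` is unmet and all entries in `[q,s)` are `0`,
then diagonal `s` is unmet. -/
lemma dg_propagate (r : Fin (2*n)) :
    ∀ (t : ℕ) (q s : Fin m), q ≤ s → s.val - q.val ≤ t →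
      ¬ Dg n m μ T (2*n-1-r.val) q.val →
      (∀ p : Fin m, q ≤ p → p < s → Psi n m μ T r p = 0) →
      ¬ Dg n m μ T (2*n-1-r.val) s.val := by
  intro t
  induction t with
  | zero =>
    intro q s hqs h0 hD _
    rw [Fin.le_def] at hqs
    have : s.val = q.val := by omega
    rw [this]; exact hD
  | succ t IH =>
    intro q s hqs hle hD hz
    rw [Fin.le_def] at hqs
    by_cases hcase : s.val = q.val
    · rw [hcase]; exact hD
    · have hlt : q.val < s.val := by omega
      set s' : Fin m := ⟨s.val - 1, by have := s.isLt; omega⟩ with hs'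
      have hD' : ¬ Dg n m μ T (2*n-1-r.val) s'.val := by
        refine IH q s' (by rw [Fin.le_def]; simp only [hs']; omega) (by simp only [hs']; omega) hD ?_
        intro p hp1 hp2
        rw [Fin.lt_def] at hp2
        exact hz p hp1 (by rw [Fin.lt_def]; simp only [hs'] at hp2; omega)
      have hz' : Psi n m μ T r s' = 0 :=
        hz s' (by rw [Fin.le_def]; simp only [hs']; omega) (by rw [Fin.lt_def]; simp only [hs']; omega)
      have hstep := psi_step r s' hD' hz' (by simp only [hs']; have := s.isLt; omega)
      have hv : s'.val + 1 = s.val := by simp only [hs']; omega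
      rw [hv] at hstep
      exact hstep

lemma posEntry_iff_dg (r : Fin (2*n)) (q : Fin m) :
    PosEntry n m (Psi n m μ T) r q ↔ Dg n m μ T (2*n-1-r.val) q.val := by
  constructor
  · intro h
    by_contra hD
    rcases h with h | ⟨h0, s, hs1, hs2, hs3⟩
    · exact psi_ne_one r q hD h
    · have hDs : ¬ Dg n m μ T (2*n-1-r.val) s.val := by
        refine dg_propagate r s.val q s (le_of_lt hs1) (Nat.sub_le _ _) hD ?_
        intro p hp1 hp2
        by_cases hpq : p.val = q.val
        · have : p = q := Fin.ext hpq
          rw [this]; exact h0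
        · rw [Fin.le_def] at hp1
          exact hs3 p (by rw [Fin.lt_def]; omega) hp2
      exact psi_ne_one r s hDs hs2
  · intro hD
    obtain ⟨s, hs1, hs2, hs3⟩ := dg_imp_run r m q (Nat.sub_le _ _) hD
    by_cases hsq : s = q
    · left; rw [← hsq]; exact hs2
    · right
      have hlt : q < s := lt_of_le_of_ne hs1 (Ne.symm hsq)
      exact ⟨hs3 q (le_refl q) hlt, s, hlt, hs2,
        fun p hp1 hp2 => hs3 p (le_of_lt hp1) hp2⟩

lemma poscount_eq (r : Fin (2*n)) :
    posCount n m (Psi n m μ T) r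
      = (Finset.univ.filter (fun q : Fin m => Dg n m μ T (2*n-1-r.val) q.val)).card := by
  unfold posCount
  exact congrArg Finset.card
    (Finset.filter_congr (fun x _ => by
      exact posEntry_iff_dg r x))

lemma count_eq (hμ : StrictAnti μ) (hT : IsSST n m μ T) (e r : Fin (2*n))
    (hre : e.val = 2*n - 1 - r.val) :
    mCount n m μ T e = posCount n m (Psi n m μ T) r := by
  rw [poscount_eq, mcount_eq hμ hT, hre]

end Aux

/-- Under the bijection `Ψ`, the number of entries `k` (resp. `k̄`) of `ST`
equals the number of positive zeros and ones in row `2n+1−2k` (resp.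
`2n+2−2k`) of `Ψ(ST)`; hence the `x`-weights of `ST` and `Ψ(ST)` agree.
(Here `k : Fin n` encodes the letter `k+1`, whose unbarred and barred codes
are `2k+1` and `2k`, and the rows are `0`-indexed.) -/
theorem psi_preserves_weights (n m : ℕ) (hn : 0 < n) (μ : Fin n → ℕ)
    (hμ : StrictAnti μ) (hpos : ∀ i, 0 < μ i) (hm : m = μ ⟨0, hn⟩)
    (T : Fin n → Fin m → Fin (2*n)) (hT : IsSST n m μ T) :
    (∀ k : Fin n,
      mCount n m μ T ⟨2*k.val+1, by have := k.isLt; omega⟩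
        = posCount n m (Psi n m μ T) ⟨2*(n-1-k.val), by have := k.isLt; omega⟩ ∧
      mCount n m μ T ⟨2*k.val, by have := k.isLt; omega⟩
        = posCount n m (Psi n m μ T) ⟨2*(n-1-k.val)+1, by have := k.isLt; omega⟩) ∧
    (∀ x : Fin n → ℝ, (∀ k, x k ≠ 0) →
      (∏ k : Fin n, x k ^
          ((mCount n m μ T ⟨2*k.val+1, by have := k.isLt; omega⟩ : ℤ)
            - (mCount n m μ T ⟨2*k.val, by have := k.isLt; omega⟩ : ℤ)))
        = ∏ k : Fin n, x k ^
          ((posCount n m (Psi n m μ T) ⟨2*(n-1-k.val), by have := k.isLt; omega⟩ : ℤ)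
            - (posCount n m (Psi n m μ T)
                ⟨2*(n-1-k.val)+1, by have := k.isLt; omega⟩ : ℤ))) := by
  have main : ∀ k : Fin n,
      mCount n m μ T ⟨2*k.val+1, by have := k.isLt; omega⟩
        = posCount n m (Psi n m μ T) ⟨2*(n-1-k.val), by have := k.isLt; omega⟩ ∧
      mCount n m μ T ⟨2*k.val, by have := k.isLt; omega⟩
        = posCount n m (Psi n m μ T) ⟨2*(n-1-k.val)+1, by have := k.isLt; omega⟩ := by
    intro k
    have hk := k.isLt
    constructor
    · exact count_eq hμ hT _ _ (by show 2*k.val+1 = 2*n - 1 - (2*(n-1-k.val)); omega)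
    · exact count_eq hμ hT _ _ (by show 2*k.val = 2*n - 1 - (2*(n-1-k.val)+1); omega)
  refine ⟨main, fun x hx => Finset.prod_congr rfl fun k _ => ?_⟩
  rw [(main k).1, (main k).2]
end
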